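/- arXiv:2510.27564 — 6 statements merged into one kernel-verified Lean document; each statement's English description precedes it below -/
import Mathlib

section
/- Let Ψ : (0,∞) → (0,∞) be locally absolutely continuous with λΨ(t) ≤ tΨ'(t) ≤ ΛΨ(t) for a.e. t > 0, where -1 < λ ≤ 0. Then for all t > 0, √(t²+1) · Ψ(√(t²+1)) ≤ 2^(Λ+1) · ( tΨ(t) + Ψ(1) ). -/
open MeasureTheory Set



private lemma swap_lemma (φ ψ : ℝ → ℝ) (r s : ℝ) (hrs : r ≤ s)
    (hφ : ContinuousOn φ (Icc r s)) (hψ : IntervalIntegrable ψ volume r s) :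
    ∫ t in r..s, φ t * (∫ u in r..t, ψ u) = ∫ u in r..s, (∫ t in u..s, φ t) * ψ u := by
  have hψO : IntegrableOn ψ (Ioc r s) := by
    rwa [intervalIntegrable_iff_integrableOn_Ioc_of_le hrs] at hψ
  have hφO : IntegrableOn φ (Ioc r s) :=
    (hφ.integrableOn_Icc).mono_set Ioc_subset_Icc_self
  set μ : Measure ℝ := volume.restrict (Ioc r s) with hμ
  have hmeas : MeasurableSet {p : ℝ × ℝ | p.2 ≤ p.1} :=
    measurableSet_le measurable_snd measurable_fst
  set F : ℝ × ℝ → ℝ := ({p : ℝ × ℝ | p.2 ≤ p.1}).indicator (fun p => φ p.1 * ψ p.2) with hF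
  have hFint : Integrable F (μ.prod μ) := (hφO.mul_prod hψO).indicator hmeas
  have hswap : ∫ t, (∫ u, F (t, u) ∂μ) ∂μ = ∫ u, (∫ t, F (t, u) ∂μ) ∂μ :=
    integral_integral_swap (f := fun t u => F (t, u)) hFint
  have hFval : ∀ t u : ℝ, F (t, u) = if u ≤ t then φ t * ψ u else 0 := by
    intro t u
    simp [hF, Set.indicator_apply]
  calc ∫ t in r..s, φ t * (∫ u in r..t, ψ u)
      = ∫ t in Ioc r s, φ t * (∫ u in r..t, ψ u) := intervalIntegral.integral_of_le hrs
    _ = ∫ t in Ioc r s, (∫ u, F (t, u) ∂μ) := by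
        refine setIntegral_congr_fun measurableSet_Ioc (fun t ht => ?_)
        have e1 : ∫ u, F (t, u) ∂μ = ∫ u, (Iic t).indicator (fun u => φ t * ψ u) u ∂μ := by
          refine integral_congr_ae (Filter.Eventually.of_forall (fun u => ?_))
          simp only [hFval, Set.indicator_apply, mem_Iic]
        have e2 : Iic t ∩ Ioc r s = Ioc r t := by
          ext u
          simp only [mem_inter_iff, mem_Iic, mem_Ioc]
          exact ⟨fun h => ⟨h.2.1, h.1⟩, fun h => ⟨h.2, h.1, h.2.trans ht.2⟩⟩
        rw [e1, integral_indicator measurableSet_Iic, hμ,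
          Measure.restrict_restrict measurableSet_Iic, e2, integral_const_mul,
          intervalIntegral.integral_of_le ht.1.le]
    _ = ∫ u in Ioc r s, (∫ t, F (t, u) ∂μ) := hswap
    _ = ∫ u in Ioc r s, (∫ t in u..s, φ t) * ψ u := by
        refine setIntegral_congr_fun measurableSet_Ioc (fun u hu => ?_)
        have e1 : ∫ t, F (t, u) ∂μ = ∫ t, (Ici u).indicator (fun t => φ t * ψ u) t ∂μ := by
          refine integral_congr_ae (Filter.Eventually.of_forall (fun t => ?_))
          simp only [hFval, Set.indicator_apply, mem_Ici]
        have e2 : Ici u ∩ Ioc r s = Icc u s := by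
          ext t
          simp only [mem_inter_iff, mem_Ici, mem_Ioc, mem_Icc]
          exact ⟨fun h => ⟨h.1, h.2.2⟩, fun h => ⟨h.1, lt_of_lt_of_le hu.1 h.1, h.2⟩⟩
        rw [e1, integral_indicator measurableSet_Ici, hμ,
          Measure.restrict_restrict measurableSet_Ici, e2, integral_Icc_eq_integral_Ioc,
          ← intervalIntegral.integral_of_le hu.2, intervalIntegral.integral_mul_const]
    _ = ∫ u in r..s, (∫ t in u..s, φ t) * ψ u := (intervalIntegral.integral_of_le hrs).symm

private lemma parts_lemma (Ψ Ψ' g g' : ℝ → ℝ) (r s : ℝ) (hrs : r ≤ s)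
    (hΨ'int : IntervalIntegrable Ψ' volume r s)
    (hFTCr : ∀ x ∈ Icc r s, Ψ x - Ψ r = ∫ t in r..x, Ψ' t)
    (hΨc : ContinuousOn Ψ (Icc r s))
    (hg : ∀ x ∈ Icc r s, HasDerivAt g (g' x) x)
    (hg'c : ContinuousOn g' (Icc r s)) :
    g s * Ψ s - g r * Ψ r = ∫ t in r..s, (g' t * Ψ t + g t * Ψ' t) := by
  have huIcc : uIcc r s = Icc r s := uIcc_of_le hrs
  have hgc : ContinuousOn g (Icc r s) := fun x hx =>
    (hg x hx).continuousAt.continuousWithinAt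
  have hg'int : IntervalIntegrable g' volume r s :=
    (huIcc ▸ hg'c : ContinuousOn g' (uIcc r s)).intervalIntegrable
  have hgΨ'int : IntervalIntegrable (fun t => g t * Ψ' t) volume r s :=
    hΨ'int.continuousOn_mul (huIcc ▸ hgc)
  have hg'Ψint : IntervalIntegrable (fun t => g' t * Ψ t) volume r s :=
    ((huIcc ▸ (hg'c.mul hΨc)) : ContinuousOn (fun t => g' t * Ψ t) (uIcc r s)).intervalIntegrable
  have hgFTC : ∀ u ∈ Icc r s, ∫ t in u..s, g' t = g s - g u := by
    intro u hu
    refine intervalIntegral.integral_eq_sub_of_hasDerivAt (fun x hx => hg x ?_) ?_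
    · rw [uIcc_of_le hu.2] at hx
      exact ⟨hu.1.trans hx.1, hx.2⟩
    · refine hg'int.mono_set ?_
      rw [huIcc, uIcc_of_le hu.2]
      exact Icc_subset_Icc hu.1 le_rfl
  have hswap : ∫ t in r..s, g' t * (∫ u in r..t, Ψ' u)
      = ∫ u in r..s, (∫ t in u..s, g' t) * Ψ' u :=
    swap_lemma g' Ψ' r s hrs hg'c hΨ'int
  have hsplit : ∫ t in r..s, g' t * Ψ t
      = ∫ t in r..s, (g' t * Ψ r + g' t * (∫ u in r..t, Ψ' u)) := by
    refine intervalIntegral.integral_congr (fun t ht => ?_)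
    rw [huIcc] at ht
    have := hFTCr t ht
    rw [← this]
    ring
  have hc1 : ∫ t in r..s, g' t * Ψ r = (g s - g r) * Ψ r := by
    rw [intervalIntegral.integral_mul_const, hgFTC r ⟨le_rfl, hrs⟩]
  have hc2 : ∫ u in r..s, (∫ t in u..s, g' t) * Ψ' u
      = g s * (Ψ s - Ψ r) - ∫ u in r..s, g u * Ψ' u := by
    have e1 : ∫ u in r..s, (∫ t in u..s, g' t) * Ψ' u
        = ∫ u in r..s, (g s * Ψ' u - g u * Ψ' u) := by
      refine intervalIntegral.integral_congr (fun u hu => ?_)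
      rw [huIcc] at hu
      rw [hgFTC u hu]
      ring
    rw [e1, intervalIntegral.integral_sub (hΨ'int.const_mul _) hgΨ'int,
      intervalIntegral.integral_const_mul, ← hFTCr s ⟨hrs, le_rfl⟩]
  have hadd : ∫ t in r..s, (g' t * Ψ t + g t * Ψ' t)
      = (∫ t in r..s, g' t * Ψ t) + ∫ t in r..s, g t * Ψ' t :=
    intervalIntegral.integral_add hg'Ψint hgΨ'int
  have hsplit2 : ∫ t in r..s, (g' t * Ψ r + g' t * (∫ u in r..t, Ψ' u))
      = (∫ t in r..s, g' t * Ψ r) + ∫ t in r..s, g' t * (∫ u in r..t, Ψ' u) := by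
    refine intervalIntegral.integral_add (hg'int.mul_const _) ?_
    have hPc : ContinuousOn (fun t => ∫ u in r..t, Ψ' u) (uIcc r s) := by
      refine intervalIntegral.continuousOn_primitive_interval ?_
      rw [huIcc]
      exact (intervalIntegrable_iff_integrableOn_Icc_of_le hrs).mp hΨ'int
    exact ((hg'c.mul (huIcc ▸ hPc)) |> (huIcc ▸ ·) :
      ContinuousOn (fun t => g' t * (∫ u in r..t, Ψ' u)) (uIcc r s)).intervalIntegrable
  rw [hadd, hsplit, hsplit2, hc1, hswap, hc2]
  ring

private lemma key_lemma (Ψ Ψ' : ℝ → ℝ) (Lam : ℝ)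
    (hInt : ∀ a b : ℝ, 0 < a → 0 < b → IntervalIntegrable Ψ' volume a b)
    (hFTC : ∀ a b : ℝ, 0 < a → a ≤ b → Ψ b - Ψ a = ∫ t in a..b, Ψ' t)
    (hup : ∀ᵐ t ∂(volume.restrict (Ioi (0:ℝ))), t * Ψ' t ≤ Lam * Ψ t)
    (r s : ℝ) (hr : 0 < r) (hrs : r ≤ s) :
    s ^ (-Lam) * Ψ s ≤ r ^ (-Lam) * Ψ r := by
  have hs : 0 < s := hr.trans_le hrs
  set g : ℝ → ℝ := fun t => t ^ (-Lam) with hgdef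
  set g' : ℝ → ℝ := fun t => (-Lam) * t ^ (-Lam - 1) with hg'def
  have hxne : ∀ x ∈ Icc r s, x ≠ 0 := fun x hx => ne_of_gt (hr.trans_le hx.1)
  have hg : ∀ x ∈ Icc r s, HasDerivAt g (g' x) x := fun x hx =>
    Real.hasDerivAt_rpow_const (Or.inl (hxne x hx))
  have hg'c : ContinuousOn g' (Icc r s) :=
    continuousOn_const.mul (ContinuousOn.rpow_const continuousOn_id
      (fun x hx => Or.inl (hxne x hx)))
  have hΨ'int : IntervalIntegrable Ψ' volume r s := hInt r s hr hs
  have hFTCr : ∀ x ∈ Icc r s, Ψ x - Ψ r = ∫ t in r..x, Ψ' t := fun x hx =>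
    hFTC r x hr hx.1
  have hΨc : ContinuousOn Ψ (Icc r s) := by
    have hP : ContinuousOn (fun x => ∫ t in r..x, Ψ' t) (Icc r s) := by
      have := intervalIntegral.continuousOn_primitive_interval
        (a := r) (b := s) (μ := volume) (f := Ψ')
        (by rw [uIcc_of_le hrs]
            exact (intervalIntegrable_iff_integrableOn_Icc_of_le hrs).mp hΨ'int)
      rwa [uIcc_of_le hrs] at this
    refine ((continuousOn_const (c := Ψ r)).add hP).congr (fun x hx => ?_)
    have := hFTCr x hx
    show Ψ x = Ψ r + ∫ t in r..x, Ψ' t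
    linarith
  have hparts := parts_lemma Ψ Ψ' g g' r s hrs hΨ'int hFTCr hΨc hg hg'c
  have hae : ∀ᵐ t ∂(volume.restrict (Icc r s)), g' t * Ψ t + g t * Ψ' t ≤ 0 := by
    have hsub : Icc r s ⊆ Ioi (0:ℝ) := fun x hx => hr.trans_le hx.1
    have h1 := ae_restrict_of_ae_restrict_of_subset hsub hup
    filter_upwards [h1, ae_restrict_mem measurableSet_Icc] with t h1 h2
    have ht : (0:ℝ) < t := hr.trans_le h2.1
    have hts : t ^ (-Lam) = t ^ (-Lam - 1) * t := by
      rw [← Real.rpow_add_one (ne_of_gt ht)]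
      ring_nf
    have e : g' t * Ψ t + g t * Ψ' t = t ^ (-Lam - 1) * (t * Ψ' t - Lam * Ψ t) := by
      simp only [hgdef, hg'def, hts]
      ring
    rw [e]
    exact mul_nonpos_iff.mpr (Or.inl ⟨Real.rpow_nonneg ht.le _, by linarith⟩)
  have hint0 : (0:ℝ) ≤ ∫ t in r..s, -(g' t * Ψ t + g t * Ψ' t) := by
    refine intervalIntegral.integral_nonneg_of_ae_restrict hrs ?_
    filter_upwards [hae] with t h
    simp only [Pi.zero_apply]
    linarith
  rw [intervalIntegral.integral_neg] at hint0
  have : g s * Ψ s ≤ g r * Ψ r := by linarith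
  simpa [hgdef] using this
/-- Lemma (psi basic iii): under the ellipticity condition with `-1 < λ ≤ 0`,
`√(t²+1)·Ψ(√(t²+1)) ≤ 2^(Λ+1)·(tΨ(t) + Ψ(1))` for all `t > 0`. -/
theorem stmt_2 (Ψ Ψ' : ℝ → ℝ) (lam Lam : ℝ)
    (hlam : -1 < lam) (hlam0 : lam ≤ 0)
    (hpos : ∀ t : ℝ, 0 < t → 0 < Ψ t)
    (hInt : ∀ a b : ℝ, 0 < a → 0 < b → IntervalIntegrable Ψ' volume a b)
    (hFTC : ∀ a b : ℝ, 0 < a → a ≤ b → Ψ b - Ψ a = ∫ t in a..b, Ψ' t)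
    (hell : ∀ᵐ t ∂(volume.restrict (Ioi (0:ℝ))),
      lam * Ψ t ≤ t * Ψ' t ∧ t * Ψ' t ≤ Lam * Ψ t) :
    ∀ t : ℝ, 0 < t →
      Real.sqrt (t ^ 2 + 1) * Ψ (Real.sqrt (t ^ 2 + 1)) ≤
        (2 : ℝ) ^ (Lam + 1) * (t * Ψ t + Ψ 1) := by
  -- first, `lam ≤ Lam`
  have hlamLe : lam ≤ Lam := by
    have hne : volume.restrict (Ioi (0:ℝ)) ≠ 0 := by
      intro h
      rw [Measure.restrict_eq_zero] at h
      simp [Real.volume_Ioi] at h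
    have hneBot : (ae (volume.restrict (Ioi (0:ℝ)))).NeBot := ae_neBot.mpr hne
    obtain ⟨x, hx1, hx2⟩ := (hell.and (ae_restrict_mem measurableSet_Ioi)).exists
    have hp := hpos x hx2
    exact le_of_mul_le_mul_right (hx1.1.trans hx1.2) hp
  have hLam1 : 0 < Lam + 1 := by linarith
  have hup : ∀ᵐ t ∂(volume.restrict (Ioi (0:ℝ))), t * Ψ' t ≤ Lam * Ψ t := by
    filter_upwards [hell] with x hx using hx.2
  intro t ht
  set s : ℝ := Real.sqrt (t ^ 2 + 1) with hsdef
  have hs1 : 1 ≤ s := by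
    rw [show (1:ℝ) = Real.sqrt 1 by simp, hsdef]
    exact Real.sqrt_le_sqrt (by nlinarith)
  have hts : t ≤ s := by
    rw [show t = Real.sqrt (t ^ 2) by rw [Real.sqrt_sq ht.le], hsdef]
    exact Real.sqrt_le_sqrt (by linarith)
  have hs0 : 0 < s := lt_of_lt_of_le one_pos hs1
  set r : ℝ := max 1 t with hrdef
  have hr1 : 1 ≤ r := le_max_left 1 t
  have hr : 0 < r := lt_of_lt_of_le one_pos hr1
  have hrt : t ≤ r := le_max_right 1 t
  have hrs : r ≤ s := max_le hs1 hts
  have hsr : s ≤ Real.sqrt 2 * r := by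
    have h1 : t ^ 2 + 1 ≤ 2 * r ^ 2 := by nlinarith
    calc s ≤ Real.sqrt (2 * r ^ 2) := Real.sqrt_le_sqrt h1
      _ = Real.sqrt 2 * r := by
          rw [Real.sqrt_mul (by norm_num) (r ^ 2), Real.sqrt_sq hr.le]
  have hrΨ : r * Ψ r ≤ t * Ψ t + Ψ 1 := by
    rcases le_total 1 t with h | h
    · rw [hrdef, max_eq_right h]
      have := hpos 1 one_pos
      linarith
    · rw [hrdef, max_eq_left h]
      have := hpos t ht
      nlinarith
  have hkey := key_lemma Ψ Ψ' Lam hInt hFTC hup r s hr hrs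
  have hΨr : 0 < Ψ r := hpos r hr
  have hsq2 : Real.sqrt 2 ≤ 2 := by
    nlinarith [Real.sq_sqrt (by norm_num : (0:ℝ) ≤ 2), Real.sqrt_nonneg 2]
  -- main chain
  have e1 : s * Ψ s = s ^ (Lam + 1) * (s ^ (-Lam) * Ψ s) := by
    rw [← mul_assoc, ← Real.rpow_add hs0]
    norm_num
  have step1 : s * Ψ s ≤ s ^ (Lam + 1) * (r ^ (-Lam) * Ψ r) := by
    rw [e1]
    exact mul_le_mul_of_nonneg_left hkey (Real.rpow_nonneg hs0.le _)
  have step2 : s ^ (Lam + 1) ≤ (Real.sqrt 2) ^ (Lam + 1) * r ^ (Lam + 1) := by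
    calc s ^ (Lam + 1) ≤ (Real.sqrt 2 * r) ^ (Lam + 1) :=
          Real.rpow_le_rpow hs0.le hsr hLam1.le
      _ = (Real.sqrt 2) ^ (Lam + 1) * r ^ (Lam + 1) :=
          Real.mul_rpow (Real.sqrt_nonneg 2) hr.le
  have hrr : r ^ (Lam + 1) * r ^ (-Lam) = r := by
    rw [← Real.rpow_add hr]
    norm_num
  have step3 : s ^ (Lam + 1) * (r ^ (-Lam) * Ψ r)
      ≤ (Real.sqrt 2) ^ (Lam + 1) * (r * Ψ r) := by
    have h0 : 0 ≤ r ^ (-Lam) * Ψ r := mul_nonneg (Real.rpow_nonneg hr.le _) hΨr.le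
    calc s ^ (Lam + 1) * (r ^ (-Lam) * Ψ r)
        ≤ ((Real.sqrt 2) ^ (Lam + 1) * r ^ (Lam + 1)) * (r ^ (-Lam) * Ψ r) :=
          mul_le_mul_of_nonneg_right step2 h0
      _ = (Real.sqrt 2) ^ (Lam + 1) * ((r ^ (Lam + 1) * r ^ (-Lam)) * Ψ r) := by ring
      _ = (Real.sqrt 2) ^ (Lam + 1) * (r * Ψ r) := by rw [hrr]
  have step4 : (Real.sqrt 2) ^ (Lam + 1) ≤ (2:ℝ) ^ (Lam + 1) :=
    Real.rpow_le_rpow (Real.sqrt_nonneg 2) hsq2 hLam1.le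
  have hrΨpos : 0 < r * Ψ r := mul_pos hr hΨr
  have h2pos : (0:ℝ) < (2:ℝ) ^ (Lam + 1) := Real.rpow_pos_of_pos (by norm_num) _
  calc s * Ψ s ≤ (Real.sqrt 2) ^ (Lam + 1) * (r * Ψ r) := le_trans step1 step3
    _ ≤ (2:ℝ) ^ (Lam + 1) * (r * Ψ r) := mul_le_mul_of_nonneg_right step4 hrΨpos.le
    _ ≤ (2:ℝ) ^ (Lam + 1) * (t * Ψ t + Ψ 1) := mul_le_mul_of_nonneg_left hrΨ h2pos.le
end

section
/- Let Ψ : (0,∞) → (0,∞) be locally absolutely continuous satisfying λΨ(t) ≤ tΨ'(t) ≤ ΛΨ(t) for a.e. t > 0, where -1 < λ ≤ 0 ≤ Λ. Then for every δ > 0 the regularization Ψ^δ(t) := Ψ(√(t² + δ)) is locally absolutely continuous on (0,∞) and satisfies the same ellipticity condition: λΨ^δ(t) ≤ t(Ψ^δ)'(t) ≤ ΛΨ^δ(t) for a.e. t > 0. -/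
open MeasureTheory Set ENNReal


lemma reg_deriv (δ : ℝ) (hδ : 0 < δ) (x : ℝ) :
    HasDerivAt (fun t => Real.sqrt (t ^ 2 + δ)) (x / Real.sqrt (x ^ 2 + δ)) x := by
  have hne : x ^ 2 + δ ≠ 0 := by positivity
  have h1 : HasDerivAt (fun t : ℝ => t ^ 2 + δ) (2 * x) x := by
    simpa using (hasDerivAt_pow 2 x).add_const δ
  have h2 := (Real.hasDerivAt_sqrt hne).comp x h1
  refine h2.congr_deriv ?_
  have hs : Real.sqrt (x ^ 2 + δ) ≠ 0 := by positivity
  field_simp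

lemma reg_mono (δ : ℝ) (hδ : 0 < δ) :
    StrictMonoOn (fun t => Real.sqrt (t ^ 2 + δ)) (Ici (0:ℝ)) := by
  intro x hx y hy hxy
  have : x ^ 2 + δ < y ^ 2 + δ := by nlinarith [mem_Ici.mp hx]
  exact Real.sqrt_lt_sqrt (by positivity) this

lemma reg_ae (δ : ℝ) (hδ : 0 < δ) (N : Set ℝ) (hN : MeasurableSet N)
    (hN0 : volume N = 0) :
    ∀ᵐ t ∂(volume.restrict (Ioi (0:ℝ))), Real.sqrt (t ^ 2 + δ) ∉ N := by
  set f : ℝ → ℝ := fun t => Real.sqrt (t ^ 2 + δ) with hf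
  set g : ℝ → ℝ := fun t => t / Real.sqrt (t ^ 2 + δ) with hg
  set F' : ℝ → ℝ →L[ℝ] ℝ := fun x => (1 : ℝ →L[ℝ] ℝ).smulRight (g x) with hF'
  have hd : ∀ x ∈ Ioi (0:ℝ), HasFDerivWithinAt f (F' x) (Ioi 0) x :=
    fun x _ => (reg_deriv δ hδ x).hasFDerivAt.hasFDerivWithinAt
  have hinj : InjOn f (Ioi 0) := ((reg_mono δ hδ).injOn).mono Ioi_subset_Ici_self
  have key := lintegral_image_eq_lintegral_abs_det_fderiv_mul volume measurableSet_Ioi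
      hd hinj (N.indicator 1)
  have hdet : ∀ x, (F' x).det = g x := fun x => ContinuousLinearMap.det_toSpanSingleton (g x)
  have hLHS : (∫⁻ x in f '' Ioi 0, N.indicator 1 x) = 0 := by
    rw [lintegral_indicator_one hN]
    exact le_antisymm ((Measure.restrict_apply_le _ _).trans hN0.le) zero_le
  rw [hLHS] at key
  have hmeas : Measurable fun x => ENNReal.ofReal |(F' x).det| * N.indicator 1 (f x) := by
    simp only [hdet]
    apply Measurable.mul
    · exact (measurable_id.div ((measurable_id.pow_const 2).add_const δ).sqrt).abs.ennreal_ofReal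
    · exact (measurable_one.indicator hN).comp
        ((measurable_id.pow_const 2).add_const δ).sqrt
  have hz := (lintegral_eq_zero_iff hmeas).mp key.symm
  filter_upwards [hz, ae_restrict_mem measurableSet_Ioi] with t ht htpos
  intro hmem
  have hgt : 0 < g t := div_pos htpos (Real.sqrt_pos.mpr (by positivity))
  have hne : ENNReal.ofReal |(F' t).det| ≠ 0 := by
    simp only [hdet, abs_of_pos hgt, ne_eq, ENNReal.ofReal_eq_zero, not_le]
    exact hgt
  have ht' : ENNReal.ofReal |(F' t).det| * N.indicator 1 (f t) = 0 := ht
  have ht0 : N.indicator 1 (f t) = (0:ℝ≥0∞) := by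
    rcases mul_eq_zero.mp ht' with h | h
    · exact absurd h hne
    · exact h
  simp [indicator_of_mem hmem] at ht0
  exact ht0 hmem

-- core: integrability on Icc
lemma reg_core (Ψ' : ℝ → ℝ) (δ : ℝ) (hδ : 0 < δ)
    (hInt : ∀ a b : ℝ, 0 < a → 0 < b → IntervalIntegrable Ψ' volume a b)
    (a b : ℝ) (ha : 0 < a) (hab : a ≤ b) :
    IntegrableOn (fun t => (t / Real.sqrt (t ^ 2 + δ)) * Ψ' (Real.sqrt (t ^ 2 + δ)))
      (Icc a b) volume ∧
    (∫ t in Icc a b, (t / Real.sqrt (t ^ 2 + δ)) * Ψ' (Real.sqrt (t ^ 2 + δ)))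
      = ∫ u in Icc (Real.sqrt (a ^ 2 + δ)) (Real.sqrt (b ^ 2 + δ)), Ψ' u := by
  set f : ℝ → ℝ := fun t => Real.sqrt (t ^ 2 + δ) with hf
  set g : ℝ → ℝ := fun t => t / Real.sqrt (t ^ 2 + δ) with hg
  have hsub : Icc a b ⊆ Ici (0:ℝ) := fun x hx => le_trans ha.le hx.1
  have hmono := (reg_mono δ hδ).mono hsub
  have hinj : InjOn f (Icc a b) := hmono.injOn
  have hcont : ContinuousOn f (Icc a b) := fun x _ => ((reg_deriv δ hδ x).continuousAt).continuousWithinAt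
  have himg : f '' Icc a b = Icc (f a) (f b) := by
    apply Subset.antisymm
    · exact hmono.monotoneOn.image_Icc_subset
    · exact intermediate_value_Icc hab hcont
  have hfa : 0 < f a := Real.sqrt_pos.mpr (by positivity)
  have hfb : 0 < f b := Real.sqrt_pos.mpr (by positivity)
  have hfab : f a ≤ f b := Real.sqrt_le_sqrt (by nlinarith)
  have hIψ : IntegrableOn Ψ' (f '' Icc a b) volume := by
    rw [himg, integrableOn_Icc_iff_integrableOn_Ioc]
    exact (intervalIntegrable_iff_integrableOn_Ioc_of_le hfab).mp (hInt (f a) (f b) hfa hfb)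
  have hd : ∀ x ∈ Icc a b, HasDerivWithinAt f (g x) (Icc a b) x :=
    fun x _ => (reg_deriv δ hδ x).hasDerivWithinAt
  have heq : EqOn (fun x => |g x| • Ψ' (f x)) (fun t => g t * Ψ' (f t)) (Icc a b) := by
    intro x hx
    have hx0 : 0 < x := lt_of_lt_of_le ha hx.1
    have : 0 < g x := div_pos hx0 (Real.sqrt_pos.mpr (by positivity))
    simp [abs_of_pos this, smul_eq_mul]
  constructor
  · have := (integrableOn_image_iff_integrableOn_abs_deriv_smul measurableSet_Icc hd hinj Ψ').mp hIψ
    exact this.congr_fun heq measurableSet_Icc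
  · have := integral_image_eq_integral_abs_deriv_smul measurableSet_Icc hd hinj Ψ'
    rw [himg] at this
    rw [this]
    exact setIntegral_congr_fun measurableSet_Icc heq.symm


set_option maxHeartbeats 800000 in
/-- Lemma (regularity of δ-regularization): if `Ψ` satisfies the ellipticity condition
with `-1 < λ ≤ 0 ≤ Λ`, then `Ψ^δ(t) := Ψ(√(t²+δ))` is locally absolutely continuous on
`(0,∞)` (with derivative `(t/√(t²+δ))Ψ'(√(t²+δ))`) and satisfies the same ellipticity
condition with the same constants. -/
theorem stmt_3 (Ψ Ψ' : ℝ → ℝ) (lam Lam : ℝ)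
    (hlam : -1 < lam) (hlam0 : lam ≤ 0) (hLam : 0 ≤ Lam)
    (hpos : ∀ t : ℝ, 0 < t → 0 < Ψ t)
    (hInt : ∀ a b : ℝ, 0 < a → 0 < b → IntervalIntegrable Ψ' volume a b)
    (hFTC : ∀ a b : ℝ, 0 < a → a ≤ b → Ψ b - Ψ a = ∫ t in a..b, Ψ' t)
    (hell : ∀ᵐ t ∂(volume.restrict (Ioi (0:ℝ))),
      lam * Ψ t ≤ t * Ψ' t ∧ t * Ψ' t ≤ Lam * Ψ t) :
    ∀ δ : ℝ, 0 < δ →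
      (∀ a b : ℝ, 0 < a → 0 < b →
        IntervalIntegrable
          (fun t => (t / Real.sqrt (t ^ 2 + δ)) * Ψ' (Real.sqrt (t ^ 2 + δ))) volume a b) ∧
      (∀ a b : ℝ, 0 < a → a ≤ b →
        Ψ (Real.sqrt (b ^ 2 + δ)) - Ψ (Real.sqrt (a ^ 2 + δ)) =
          ∫ t in a..b, (t / Real.sqrt (t ^ 2 + δ)) * Ψ' (Real.sqrt (t ^ 2 + δ))) ∧
      (∀ᵐ t ∂(volume.restrict (Ioi (0:ℝ))),
        lam * Ψ (Real.sqrt (t ^ 2 + δ)) ≤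
            t * ((t / Real.sqrt (t ^ 2 + δ)) * Ψ' (Real.sqrt (t ^ 2 + δ))) ∧
          t * ((t / Real.sqrt (t ^ 2 + δ)) * Ψ' (Real.sqrt (t ^ 2 + δ))) ≤
            Lam * Ψ (Real.sqrt (t ^ 2 + δ))) := by
  intro δ hδ
  refine ⟨?_, ?_, ?_⟩
  · -- integrability
    intro a b ha hb
    rcases le_total a b with h | h
    · exact IntegrableOn.intervalIntegrable
        (by rw [uIcc_of_le h]; exact (reg_core Ψ' δ hδ hInt a b ha h).1)
    · exact (IntegrableOn.intervalIntegrable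
        (by rw [uIcc_of_le h]; exact (reg_core Ψ' δ hδ hInt b a hb h).1)).symm
  · -- FTC
    intro a b ha hab
    have core := (reg_core Ψ' δ hδ hInt a b ha hab).2
    have hfa : 0 < Real.sqrt (a ^ 2 + δ) := Real.sqrt_pos.mpr (by positivity)
    have hfab : Real.sqrt (a ^ 2 + δ) ≤ Real.sqrt (b ^ 2 + δ) :=
      Real.sqrt_le_sqrt (by nlinarith)
    rw [intervalIntegral.integral_of_le hab, ← integral_Icc_eq_integral_Ioc, core,
      integral_Icc_eq_integral_Ioc, ← intervalIntegral.integral_of_le hfab]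
    exact hFTC _ _ hfa hfab
  · -- ellipticity a.e.
    rw [MeasureTheory.ae_iff] at hell
    obtain ⟨N, hSN, hNmeas, hNz⟩ := exists_measurable_superset_of_null hell
    have hM0 : volume (N ∩ Ioi (0:ℝ)) = 0 := by
      rw [Measure.restrict_apply hNmeas] at hNz
      exact hNz
    have hae := reg_ae δ hδ (N ∩ Ioi 0) (hNmeas.inter measurableSet_Ioi) hM0
    filter_upwards [hae, ae_restrict_mem measurableSet_Ioi] with t hnot htpos
    have htpos' : (0:ℝ) < t := htpos
    set s := Real.sqrt (t ^ 2 + δ) with hs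
    have hspos : 0 < s := Real.sqrt_pos.mpr (by positivity)
    have hsN : s ∉ N := fun h => hnot ⟨h, hspos⟩
    have hP : lam * Ψ s ≤ s * Ψ' s ∧ s * Ψ' s ≤ Lam * Ψ s := by
      by_contra h
      exact hsN (hSN h)
    obtain ⟨h1, h2⟩ := hP
    have hssq : s ^ 2 = t ^ 2 + δ := Real.sq_sqrt (by positivity)
    have hts : t * ((t / s) * Ψ' s) = (t ^ 2 / s ^ 2) * (s * Ψ' s) := by
      field_simp
    have hc0 : 0 ≤ t ^ 2 / s ^ 2 := by positivity
    have hc1 : t ^ 2 / s ^ 2 ≤ 1 := by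
      rw [div_le_one (by positivity), hssq]; linarith
    have hΨ : 0 < Ψ s := hpos s hspos
    have hL : lam * Ψ s ≤ 0 := mul_nonpos_of_nonpos_of_nonneg hlam0 hΨ.le
    have hU : 0 ≤ Lam * Ψ s := mul_nonneg hLam hΨ.le
    rw [hts]
    constructor
    · nlinarith [mul_nonneg hc0 (sub_nonneg.mpr h1),
        mul_nonneg (sub_nonneg.mpr hc1) (neg_nonneg.mpr hL)]
    · nlinarith [mul_nonneg hc0 (sub_nonneg.mpr h2),
        mul_nonneg (sub_nonneg.mpr hc1) hU]
end

section
/- Let Ψ : [0,∞) → [0,∞) be locally absolutely continuous on (0,∞) with tΨ'(t) ≥ λΨ(t) for a.e. t > 0, for some constant -1 < λ ≤ 0. Then for all s, t ≥ 0: (tΨ(t) - sΨ(s))(t - s) ≥ ((1+λ)/4) · |t - s|² · Ψ((t ∨ s)/2). -/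
open MeasureTheory Set

/-- Effective convexity (scalar form): if `Ψ ≥ 0` is locally AC on `(0,∞)` with
`tΨ'(t) ≥ λΨ(t)` a.e. for some `-1 < λ ≤ 0`, then for all `s, t ≥ 0`,
`(tΨ(t) - sΨ(s))(t-s) ≥ ((1+λ)/4)|t-s|²Ψ((t∨s)/2)`. -/
theorem stmt_6 (Ψ Ψ' : ℝ → ℝ) (lam : ℝ)
    (hlam : -1 < lam) (hlam0 : lam ≤ 0)
    (hnonneg : ∀ t : ℝ, 0 ≤ t → 0 ≤ Ψ t)
    (hInt : ∀ a b : ℝ, 0 < a → 0 < b → IntervalIntegrable Ψ' volume a b)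
    (hFTC : ∀ a b : ℝ, 0 < a → a ≤ b → Ψ b - Ψ a = ∫ t in a..b, Ψ' t)
    (hell : ∀ᵐ t ∂(volume.restrict (Ioi (0:ℝ))), lam * Ψ t ≤ t * Ψ' t) :
    ∀ s t : ℝ, 0 ≤ s → 0 ≤ t →
      ((1 + lam) / 4) * |t - s| ^ 2 * Ψ (max t s / 2) ≤
        (t * Ψ t - s * Ψ s) * (t - s) := by
  have hlam1 : (0:ℝ) < 1 + lam := by linarith
  -- Ψ is continuous on compact subintervals of (0,∞)
  have hcont : ∀ a b : ℝ, 0 < a → a ≤ b → ContinuousOn Ψ (Icc a b) := by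
    intro a b ha hab
    have hprim : ContinuousOn (fun x => ∫ t in a..x, Ψ' t) (Icc a b) := by
      have := intervalIntegral.continuousOn_primitive_interval'
        (hInt a b ha (ha.trans_le hab)) left_mem_uIcc
      rwa [uIcc_of_le hab] at this
    have h1 : ContinuousOn (fun x => Ψ a + ∫ t in a..x, Ψ' t) (Icc a b) :=
      continuousOn_const.add hprim
    refine h1.congr fun x hx => ?_
    have := hFTC a x ha hx.1
    linarith
  have hPsiInt : ∀ a b : ℝ, 0 < a → a ≤ b → IntegrableOn Ψ (Ioc a b) := fun a b ha hab =>
    ((hcont a b ha hab).integrableOn_Icc).mono_set Ioc_subset_Icc_self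
  -- Key inequality: b Ψ(b) - a Ψ(a) ≥ (1+λ) ∫_{(a,b]} Ψ  for 0 < a ≤ b.
  have key : ∀ a b : ℝ, 0 < a → a ≤ b →
      (1 + lam) * ∫ r in Ioc a b, Ψ r ≤ b * Ψ b - a * Ψ a := by
    intro a b ha hab
    have hb : 0 < b := ha.trans_le hab
    set μ := volume.restrict (Ioc a b) with hμ
    haveI : IsFiniteMeasure μ := by
      constructor
      rw [hμ, Measure.restrict_apply_univ, Real.volume_Ioc]
      exact ENNReal.ofReal_lt_top
    have hΨ'int : IntegrableOn Ψ' (Ioc a b) :=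
      (intervalIntegrable_iff_integrableOn_Ioc_of_le hab).mp (hInt a b ha hb)
    have hmeas : AEStronglyMeasurable Ψ' μ := hΨ'int.aestronglyMeasurable
    -- the kernel for Fubini
    set f : ℝ → ℝ → ℝ := fun x r => if x < r then Ψ' r else 0 with hfdef
    have hfmeas : AEStronglyMeasurable (Function.uncurry f) (μ.prod μ) := by
      have h1 : AEStronglyMeasurable (fun p : ℝ × ℝ => Ψ' p.2) (μ.prod μ) := hmeas.comp_snd
      have h2 : MeasurableSet {p : ℝ × ℝ | p.1 < p.2} :=
        measurableSet_lt measurable_fst measurable_snd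
      have heq : Function.uncurry f = ({p : ℝ × ℝ | p.1 < p.2}).indicator
          (fun p => Ψ' p.2) := by
        ext p
        by_cases h : p.1 < p.2 <;> simp [Function.uncurry, hfdef, h, Set.indicator]
      rw [heq]
      exact h1.indicator h2
    have hnormint : Integrable (fun p : ℝ × ℝ => ‖Ψ' p.2‖) (μ.prod μ) := by
      refine (integrable_prod_iff' (hmeas.norm.comp_snd)).mpr ⟨?_, ?_⟩
      · refine Filter.Eventually.of_forall fun r => ?_
        exact (integrable_const ‖Ψ' r‖ : Integrable (fun _ : ℝ => ‖Ψ' r‖) μ)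
      · simp only [norm_norm, integral_const, smul_eq_mul]
        exact hΨ'int.norm.const_mul _
    have hfint : Integrable (Function.uncurry f) (μ.prod μ) := by
      refine hnormint.mono' hfmeas ?_
      refine Filter.Eventually.of_forall fun p => ?_
      by_cases h : p.1 < p.2 <;>
        simp [Function.uncurry, hfdef, h, norm_nonneg, abs_nonneg]
    have hswap : (∫ x, ∫ r, f x r ∂μ ∂μ) = ∫ r, ∫ x, f x r ∂μ ∂μ :=
      integral_integral_swap hfint
    -- compute the left side of the swap
    have hL : (∫ x, ∫ r, f x r ∂μ ∂μ) = ∫ x in Ioc a b, (Ψ b - Ψ x) := by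
      rw [hμ]
      refine setIntegral_congr_fun measurableSet_Ioc fun x hx => ?_
      have hxpos : 0 < x := ha.trans hx.1
      have hinner : (fun r => f x r) = (Ioi x).indicator Ψ' := by
        ext r
        by_cases h : x < r <;> simp [hfdef, h, Set.indicator, mem_Ioi]
      rw [hinner, integral_indicator measurableSet_Ioi,
        Measure.restrict_restrict measurableSet_Ioi]
      have hset : Ioi x ∩ Ioc a b = Ioc x b := by
        ext r
        simp only [mem_inter_iff, mem_Ioi, mem_Ioc]
        constructor
        · rintro ⟨h1, _, h3⟩; exact ⟨h1, h3⟩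
        · rintro ⟨h1, h2⟩; exact ⟨h1, hx.1.trans h1, h2⟩
      rw [hset, ← intervalIntegral.integral_of_le hx.2]
      have := hFTC x b hxpos hx.2
      linarith
    -- compute the right side of the swap
    have hR : (∫ r, ∫ x, f x r ∂μ ∂μ) = ∫ r in Ioc a b, (r - a) * Ψ' r := by
      rw [hμ]
      refine setIntegral_congr_fun measurableSet_Ioc fun r hr => ?_
      have hinner : (fun x => f x r) = (Iio r).indicator (fun _ => Ψ' r) := by
        ext x
        by_cases h : x < r <;> simp [hfdef, h, Set.indicator, mem_Iio]
      rw [hinner, integral_indicator_const _ measurableSet_Iio]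
      have hμIio : (volume.restrict (Ioc a b)) (Iio r) = ENNReal.ofReal (r - a) := by
        rw [Measure.restrict_apply measurableSet_Iio]
        have hset : Iio r ∩ Ioc a b = Ioo a r := by
          ext x
          simp only [mem_inter_iff, mem_Iio, mem_Ioc, mem_Ioo]
          constructor
          · rintro ⟨h1, h2, _⟩; exact ⟨h2, h1⟩
          · rintro ⟨h1, h2⟩; exact ⟨h2, h1, h2.le.trans hr.2⟩
        rw [hset, Real.volume_Ioo]
      rw [Measure.real, hμIio, ENNReal.toReal_ofReal (by linarith [hr.1]), smul_eq_mul]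
    -- hence the integration by parts identity
    have hconstint : IntegrableOn (fun _ : ℝ => Ψ b) (Ioc a b) := by
      refine integrableOn_const ?_
      rw [Real.volume_Ioc]; exact ENNReal.ofReal_ne_top
    have hPsiab : IntegrableOn Ψ (Ioc a b) := hPsiInt a b ha hab
    have hLval : (∫ x in Ioc a b, (Ψ b - Ψ x)) =
        (b - a) * Ψ b - ∫ x in Ioc a b, Ψ x := by
      rw [integral_sub hconstint hPsiab, setIntegral_const, Real.volume_real_Ioc_of_le hab,
        smul_eq_mul]
    have hibp : (∫ r in Ioc a b, (r - a) * Ψ' r) =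
        (b - a) * Ψ b - ∫ x in Ioc a b, Ψ x := by
      rw [← hLval, ← hL, hswap, hR]
    -- integrability of r ↦ (r - a) Ψ'(r) and r ↦ r Ψ'(r)
    have hsubint : Integrable (fun r => (r - a) * Ψ' r) μ := by
      refine hΨ'int.bdd_mul (c := b - a)
        ((measurable_id.sub measurable_const).aestronglyMeasurable) ?_
      rw [hμ, ae_restrict_iff' measurableSet_Ioc]
      refine Filter.Eventually.of_forall fun r hr => ?_
      rw [Real.norm_eq_abs, abs_of_nonneg (by linarith [hr.1])]
      linarith [hr.2]
    have hrint : Integrable (fun r => r * Ψ' r) μ := by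
      have : (fun r => r * Ψ' r) = fun r => (r - a) * Ψ' r + a * Ψ' r := by
        ext r; ring
      rw [this]
      exact hsubint.add (hΨ'int.const_mul a)
    -- ∫ r Ψ' = b Ψ b - a Ψ a - ∫ Ψ
    have hibp' : (∫ r in Ioc a b, r * Ψ' r) =
        b * Ψ b - a * Ψ a - ∫ x in Ioc a b, Ψ x := by
      have hsplit : (∫ r in Ioc a b, r * Ψ' r) =
          (∫ r in Ioc a b, (r - a) * Ψ' r) + ∫ r in Ioc a b, a * Ψ' r := by
        rw [← integral_add hsubint (hΨ'int.const_mul a)]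
        congr 1; ext r; ring
      have hconst : (∫ r in Ioc a b, a * Ψ' r) = a * (Ψ b - Ψ a) := by
        rw [integral_const_mul, ← intervalIntegral.integral_of_le hab, ← hFTC a b ha hab]
      rw [hsplit, hibp, hconst]; ring
    -- a.e. inequality λΨ ≤ rΨ' on (a, b]
    have haeIoc : ∀ᵐ r ∂μ, lam * Ψ r ≤ r * Ψ' r := by
      rw [hμ]
      exact ae_restrict_of_ae_restrict_of_subset
        (fun x hx => ha.trans hx.1) hell
    have hmono : (∫ r in Ioc a b, lam * Ψ r) ≤ ∫ r in Ioc a b, r * Ψ' r :=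
      integral_mono_ae (hPsiab.const_mul lam) hrint haeIoc
    have hlconst : (∫ r in Ioc a b, lam * Ψ r) = lam * ∫ r in Ioc a b, Ψ r :=
      integral_const_mul lam Ψ
    rw [hlconst, hibp'] at hmono
    linarith
  -- Monotonicity of r ↦ r Ψ(r)
  have hIntNonneg : ∀ a b : ℝ, 0 < a → (0:ℝ) ≤ ∫ r in Ioc a b, Ψ r := by
    intro a b ha
    exact setIntegral_nonneg measurableSet_Ioc fun x hx => hnonneg x (ha.trans hx.1).le
  have mono : ∀ a b : ℝ, 0 < a → a ≤ b → a * Ψ a ≤ b * Ψ b := by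
    intro a b ha hab
    have h1 := key a b ha hab
    have h2 := hIntNonneg a b ha
    nlinarith
  -- Main estimate for 0 ≤ s < t
  have hmain : ∀ s t : ℝ, 0 ≤ s → s < t →
      ((1 + lam) / 4) * (t - s) ^ 2 * Ψ (t / 2) ≤ (t * Ψ t - s * Ψ s) * (t - s) := by
    intro s t hs hst
    have ht : 0 < t := lt_of_le_of_lt hs hst
    have hm : 0 < t / 2 := by linarith
    set a := max s (t / 2) with hadef
    have ham : t / 2 ≤ a := le_max_right _ _
    have ha : 0 < a := lt_of_lt_of_le hm ham
    have hat : a ≤ t := max_le hst.le (by linarith)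
    have hsa : s ≤ a := le_max_left _ _
    have hΨm : 0 ≤ Ψ (t / 2) := hnonneg _ hm.le
    -- s Ψ s ≤ a Ψ a
    have h1 : s * Ψ s ≤ a * Ψ a := by
      rcases eq_or_lt_of_le hs with h0 | h0
      · rw [← h0, zero_mul]
        exact mul_nonneg ha.le (hnonneg a ha.le)
      · exact mono s a h0 hsa
    -- pointwise lower bound for Ψ on (a, t]
    have h2 : ∀ x ∈ Ioc a t, Ψ (t / 2) / 2 ≤ Ψ x := by
      intro x hx
      have hmx : t / 2 < x := lt_of_le_of_lt ham hx.1
      have hxpos : 0 < x := hm.trans hmx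
      have h3 : (t / 2) * Ψ (t / 2) ≤ x * Ψ x := mono _ x hm hmx.le
      have hΨx : 0 ≤ Ψ x := hnonneg x hxpos.le
      have h4 : x * Ψ x ≤ t * Ψ x := mul_le_mul_of_nonneg_right hx.2 hΨx
      have h5 : t * (Ψ (t / 2) / 2) ≤ t * Ψ x := by nlinarith
      exact le_of_mul_le_mul_left h5 ht
    -- integral lower bound
    have h6 : (Ψ (t / 2) / 2) * (t - a) ≤ ∫ x in Ioc a t, Ψ x := by
      have := setIntegral_ge_of_const_le measurableSet_Ioc
        (by rw [Real.volume_Ioc]; exact ENNReal.ofReal_ne_top) h2 (hPsiInt a t ha hat)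
      rw [Real.volume_real_Ioc_of_le hat, smul_eq_mul] at this
      linarith
    have h7 := key a t ha hat
    -- t - a ≥ (t - s)/2
    have h8 : (t - s) / 2 ≤ t - a := by
      rcases max_cases s (t / 2) with ⟨hh, _⟩ | ⟨hh, _⟩ <;> rw [hadef, hh] <;> linarith
    -- combine
    have hc : 0 ≤ (1 + lam) * (Ψ (t / 2) / 2) := by positivity
    have h9 : (1 + lam) * ((Ψ (t / 2) / 2) * (t - a)) ≤ t * Ψ t - a * Ψ a := by
      calc (1 + lam) * ((Ψ (t / 2) / 2) * (t - a))
          ≤ (1 + lam) * ∫ x in Ioc a t, Ψ x :=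
            mul_le_mul_of_nonneg_left h6 hlam1.le
        _ ≤ t * Ψ t - a * Ψ a := h7
    have h10 : (1 + lam) * (Ψ (t / 2) / 2) * ((t - s) / 2) ≤ t * Ψ t - s * Ψ s := by
      have := mul_le_mul_of_nonneg_left h8 hc
      nlinarith
    have hts : 0 ≤ t - s := by linarith
    nlinarith [mul_le_mul_of_nonneg_right h10 hts]
  -- conclude
  intro s t hs ht
  rcases lt_trichotomy s t with hst | hst | hst
  · rw [max_eq_left hst.le, abs_of_nonneg (by linarith : (0:ℝ) ≤ t - s)]
    exact hmain s t hs hst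
  · subst hst
    simp
  · rw [max_eq_right hst.le, abs_of_neg (by linarith : t - s < 0), neg_sub]
    have := hmain t s ht hst
    nlinarith [this]
end

section
/- Let Ψ : [0,∞) → [0,∞) be locally absolutely continuous on (0,∞) with tΨ'(t) ≥ λΨ(t) for a.e. t > 0, for some -1 < λ ≤ 0, and set Φ(T) := ∫₀ᵀ rΨ(r) dr. Then for all S, T ≥ 0: Φ(T) - Φ(S) - Φ'(S)(T - S) ≥ ((1+λ)/9) · |S - T|² · inf{ Ψ(r) : (S∨T)/3 ≤ r ≤ S∨T }. -/
open MeasureTheory Set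


lemma swap_aux {a b : ℝ} (hab : a ≤ b) {g : ℝ → ℝ} (hg : IntegrableOn g (Ioc a b)) :
    ∫ t in Set.Ioc a b, (∫ u in Set.Ioc a t, g u) = ∫ u in Set.Ioc a b, (b - u) * g u := by
  set μ := volume.restrict (Ioc a b) with hμ
  have hgμ : Integrable g μ := hg
  have hfin : IsFiniteMeasure μ := by
    constructor
    rw [hμ, Measure.restrict_apply_univ]
    exact measure_Ioc_lt_top
  set s : Set (ℝ × ℝ) := {p : ℝ × ℝ | p.2 ≤ p.1} with hs
  have hsm : MeasurableSet s := (isClosed_le continuous_snd continuous_fst).measurableSet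
  set F : ℝ × ℝ → ℝ := s.indicator (fun p => g p.2) with hF
  have hsnd : Integrable (fun p : ℝ × ℝ => g p.2) (μ.prod μ) := by
    have hmap : Measure.map Prod.snd (μ.prod μ) = (μ Set.univ) • μ := Measure.map_snd_prod
    have h1 : Integrable g ((μ Set.univ) • μ) :=
      hgμ.smul_measure (measure_ne_top μ Set.univ)
    have h2 : Integrable g (Measure.map Prod.snd (μ.prod μ)) := by rwa [hmap]
    exact (integrable_map_measure (by rw [hmap]; exact h1.aestronglyMeasurable)
      measurable_snd.aemeasurable).mp h2
  have hFint : Integrable F (μ.prod μ) := hsnd.indicator hsm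
  have hswap := integral_integral_swap (f := fun t u => F (t, u)) (μ := μ) (ν := μ)
    (by exact hFint)
  have hL : ∀ t ∈ Ioc a b, (∫ u, F (t, u) ∂μ) = ∫ u in Set.Ioc a t, g u := by
    intro t ht
    have h1 : (fun u => F (t, u)) = (Iic t).indicator g := by
      funext u; by_cases h : u ≤ t <;> simp [hF, hs, Set.indicator, h]
    have h2 : Iic t ∩ Ioc a b = Ioc a t := by
      ext u
      simp only [mem_inter_iff, mem_Iic, mem_Ioc]
      constructor
      · rintro ⟨h1, h2, h3⟩; exact ⟨h2, h1⟩
      · rintro ⟨h1, h2⟩; exact ⟨h2, h1, h2.trans ht.2⟩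
    rw [h1, integral_indicator measurableSet_Iic, hμ,
      Measure.restrict_restrict measurableSet_Iic, h2]
  have hR : ∀ u ∈ Ioc a b, (∫ t, F (t, u) ∂μ) = (b - u) * g u := by
    intro u hu
    have h1 : (fun t => F (t, u)) = (Ici u).indicator (fun _ => g u) := by
      funext t; by_cases h : u ≤ t <;> simp [hF, hs, Set.indicator, h]
    have h2 : Ici u ∩ Ioc a b = Icc u b := by
      ext t
      simp only [mem_inter_iff, mem_Ici, mem_Ioc, mem_Icc]
      constructor
      · rintro ⟨h1, h2, h3⟩; exact ⟨h1, h3⟩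
      · rintro ⟨h1, h2⟩; exact ⟨h1, lt_of_lt_of_le hu.1 h1, h2⟩
    rw [h1, integral_indicator measurableSet_Ici, hμ,
      Measure.restrict_restrict measurableSet_Ici, h2, setIntegral_const, smul_eq_mul,
      measureReal_def, Real.volume_Icc, ENNReal.toReal_ofReal (by linarith [hu.2] : (0:ℝ) ≤ b - u)]
  calc ∫ t in Set.Ioc a b, (∫ u in Set.Ioc a t, g u)
      = ∫ t, (∫ u, F (t, u) ∂μ) ∂μ :=
        (setIntegral_congr_fun measurableSet_Ioc (fun t ht => hL t ht)).symm
    _ = ∫ u, (∫ t, F (t, u) ∂μ) ∂μ := hswap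
    _ = ∫ u in Set.Ioc a b, (b - u) * g u :=
        setIntegral_congr_fun measurableSet_Ioc (fun u hu => hR u hu)


lemma psi_int (Ψ Ψ' : ℝ → ℝ)
    (hIntΨ' : ∀ a b : ℝ, 0 < a → 0 < b → IntervalIntegrable Ψ' volume a b)
    (hFTC : ∀ a b : ℝ, 0 < a → a ≤ b → Ψ b - Ψ a = ∫ t in a..b, Ψ' t)
    {a b : ℝ} (ha : 0 < a) (hab : a ≤ b) : IntervalIntegrable Ψ volume a b := by
  have hb : 0 < b := ha.trans_le hab
  have hΨ'ab := hIntΨ' a b ha hb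
  have hΨ'Icc : IntegrableOn Ψ' (Icc a b) :=
    (intervalIntegrable_iff_integrableOn_Icc_of_le hab).mp hΨ'ab
  have hF : ContinuousOn (fun x => Ψ a + ∫ t in a..x, Ψ' t) (Icc a b) := by
    apply continuousOn_const.add
    have := intervalIntegral.continuousOn_primitive_interval (f := Ψ') (μ := volume)
      (a := a) (b := b) (by rwa [uIcc_of_le hab])
    rwa [uIcc_of_le hab] at this
  have heq : EqOn (fun x => Ψ a + ∫ t in a..x, Ψ' t) Ψ (Icc a b) := by
    intro t ht
    have := hFTC a t ha ht.1
    simp only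
    linarith
  rw [intervalIntegrable_iff_integrableOn_Icc_of_le hab]
  exact (hF.integrableOn_Icc).congr_fun heq measurableSet_Icc


lemma keyA (Ψ Ψ' : ℝ → ℝ) (lam : ℝ)
    (hIntΨ' : ∀ a b : ℝ, 0 < a → 0 < b → IntervalIntegrable Ψ' volume a b)
    (hFTC : ∀ a b : ℝ, 0 < a → a ≤ b → Ψ b - Ψ a = ∫ t in a..b, Ψ' t)
    (hell : ∀ᵐ t ∂(volume.restrict (Ioi (0:ℝ))), lam * Ψ t ≤ t * Ψ' t)
    {a b : ℝ} (ha : 0 < a) (hab : a ≤ b) :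
    a * Ψ a + (1 + lam) * ∫ t in a..b, Ψ t ≤ b * Ψ b := by
  have hb : 0 < b := ha.trans_le hab
  have hΨ'ab := hIntΨ' a b ha hb
  have hΨ'Icc : IntegrableOn Ψ' (Icc a b) :=
    (intervalIntegrable_iff_integrableOn_Icc_of_le hab).mp hΨ'ab
  have hΨab : IntervalIntegrable Ψ volume a b := psi_int Ψ Ψ' hIntΨ' hFTC ha hab
  have htΨ' : IntervalIntegrable (fun t => t * Ψ' t) volume a b :=
    hΨ'ab.continuousOn_mul continuous_id.continuousOn
  have hprim : ContinuousOn (fun x => ∫ u in Ioc a x, Ψ' u) (Icc a b) :=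
    intervalIntegral.continuousOn_primitive hΨ'Icc
  have hprimInt : IntegrableOn (fun x => ∫ u in Ioc a x, Ψ' u) (Ioc a b) :=
    (hprim.integrableOn_Icc).mono_set Ioc_subset_Icc_self
  have h1 : ∫ t in Ioc a b, Ψ t
      = (b - a) * Ψ a + ∫ t in Ioc a b, (∫ u in Ioc a t, Ψ' u) := by
    have hpt : ∀ t ∈ Ioc a b, Ψ t = Ψ a + ∫ u in Ioc a t, Ψ' u := by
      intro t ht
      have h := hFTC a t ha ht.1.le
      rw [intervalIntegral.integral_of_le ht.1.le] at h
      linarith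
    rw [setIntegral_congr_fun measurableSet_Ioc hpt,
      integral_add (integrableOn_const (C := Ψ a) measure_Ioc_lt_top.ne) hprimInt]
    congr 1
    rw [setIntegral_const, smul_eq_mul, measureReal_def, Real.volume_Ioc,
      ENNReal.toReal_ofReal (by linarith)]
  have h2 : ∫ t in Ioc a b, (∫ u in Ioc a t, Ψ' u)
      = ∫ u in Ioc a b, (b - u) * Ψ' u :=
    swap_aux hab (hΨ'Icc.mono_set Ioc_subset_Icc_self)
  have h3 : ∫ u in Ioc a b, (b - u) * Ψ' u
      = b * (Ψ b - Ψ a) - ∫ u in Ioc a b, u * Ψ' u := by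
    have e1 : ∫ u in Ioc a b, (b - u) * Ψ' u
        = (∫ u in Ioc a b, b * Ψ' u) - ∫ u in Ioc a b, u * Ψ' u := by
      rw [← integral_sub ((hΨ'Icc.mono_set Ioc_subset_Icc_self).const_mul b) htΨ'.1]
      apply setIntegral_congr_fun measurableSet_Ioc
      intro u _
      ring
    rw [e1, integral_const_mul]
    congr 2
    rw [← intervalIntegral.integral_of_le hab, ← hFTC a b ha hab]
  have h4 : lam * ∫ t in Ioc a b, Ψ t ≤ ∫ u in Ioc a b, u * Ψ' u := by
    rw [← integral_const_mul]
    apply integral_mono_ae (hΨab.1.const_mul lam) htΨ'.1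
    exact ae_restrict_of_ae_restrict_of_subset
      (fun x hx => ha.trans hx.1) hell
  rw [intervalIntegral.integral_of_le hab]
  nlinarith [h1, h2, h3, h4]

/-- Effective convexity for `Φ(T) := ∫₀ᵀ rΨ(r) dr` (with `Φ'(S) = SΨ(S)`): for all
`S, T ≥ 0`, `Φ(T) - Φ(S) - Φ'(S)(T-S) ≥ ((1+λ)/9)|S-T|² inf{Ψ(r) : (S∨T)/3 ≤ r ≤ S∨T}`. -/
theorem stmt_7 (Ψ Ψ' : ℝ → ℝ) (lam : ℝ)
    (hlam : -1 < lam) (hlam0 : lam ≤ 0)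
    (hnonneg : ∀ t : ℝ, 0 ≤ t → 0 ≤ Ψ t)
    (hIntΨ' : ∀ a b : ℝ, 0 < a → 0 < b → IntervalIntegrable Ψ' volume a b)
    (hFTC : ∀ a b : ℝ, 0 < a → a ≤ b → Ψ b - Ψ a = ∫ t in a..b, Ψ' t)
    (hell : ∀ᵐ t ∂(volume.restrict (Ioi (0:ℝ))), lam * Ψ t ≤ t * Ψ' t)
    (hint : ∀ t : ℝ, 0 < t → IntervalIntegrable (fun r => r * Ψ r) volume 0 t) :
    ∀ S T : ℝ, 0 ≤ S → 0 ≤ T →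
      ((1 + lam) / 9) * |S - T| ^ 2 * sInf (Ψ '' Icc (max S T / 3) (max S T)) ≤
        (∫ r in (0:ℝ)..T, r * Ψ r) - (∫ r in (0:ℝ)..S, r * Ψ r) - S * Ψ S * (T - S) := by
  intro S T hS hT
  have hl1 : (0:ℝ) ≤ 1 + lam := by linarith
  set M := max S T with hM
  set m := sInf (Ψ '' Icc (M / 3) M) with hm
  have hM0 : 0 ≤ M := le_trans hS (le_max_left S T)
  have hKlb : ∀ x ∈ Ψ '' Icc (M / 3) M, (0:ℝ) ≤ x := by
    rintro x ⟨r, hr, rfl⟩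
    exact hnonneg r (le_trans (by linarith) hr.1)
  have hm0 : 0 ≤ m := Real.sInf_nonneg hKlb
  have hmle : ∀ t : ℝ, M / 3 ≤ t → t ≤ M → m ≤ Ψ t := fun t h1 h2 =>
    csInf_le ⟨0, hKlb⟩ ⟨t, ⟨h1, h2⟩, rfl⟩
  by_cases hMz : M = 0
  · have hS0 : S = 0 := le_antisymm (hMz ▸ le_max_left S T) hS
    have hT0 : T = 0 := le_antisymm (hMz ▸ le_max_right S T) hT
    simp [hS0, hT0]
  have hMpos : 0 < M := lt_of_le_of_ne hM0 (Ne.symm hMz)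
  rcases le_total S T with hST | hTS
  · -- case S ≤ T
    have hMT : M = T := max_eq_right hST
    have hT0 : 0 < T := hMT ▸ hMpos
    have hsub : ∀ x y : ℝ, 0 ≤ x → y ≤ T → x ≤ y →
        IntervalIntegrable (fun r => r * Ψ r) volume x y := fun x y hx hy hxy =>
      (hint T hT0).mono_set (by rw [uIcc_of_le hxy, uIcc_of_le hT]; exact Icc_subset_Icc hx hy)
    set d := max S (T / 3) with hd
    have hd3 : T / 3 ≤ d := le_max_right _ _
    have hdS : S ≤ d := le_max_left _ _
    have hdT : d ≤ T := max_le hST (by linarith)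
    have hd0 : 0 < d := lt_of_lt_of_le (by linarith) hd3
    have habs : |S - T| = T - S := by rw [abs_sub_comm]; exact abs_of_nonneg (by linarith)
    -- rewrite RHS
    have h0S := hsub 0 S le_rfl hST hS
    have hSd := hsub S d hS (hdT) hdS
    have hdT' := hsub d T hd0.le le_rfl hdT
    have hST' := hsub S T hS le_rfl hST
    have hRHS : (∫ r in (0:ℝ)..T, r * Ψ r) - (∫ r in (0:ℝ)..S, r * Ψ r) - S * Ψ S * (T - S)
        = (∫ r in S..d, (r * Ψ r - S * Ψ S)) + ∫ r in d..T, (r * Ψ r - S * Ψ S) := by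
      have e1 : (∫ r in (0:ℝ)..S, r * Ψ r) + ∫ r in S..T, r * Ψ r
          = ∫ r in (0:ℝ)..T, r * Ψ r :=
        intervalIntegral.integral_add_adjacent_intervals h0S hST'
      have e2 : (∫ r in S..d, (r * Ψ r - S * Ψ S)) + ∫ r in d..T, (r * Ψ r - S * Ψ S)
          = ∫ r in S..T, (r * Ψ r - S * Ψ S) :=
        intervalIntegral.integral_add_adjacent_intervals (hSd.sub intervalIntegrable_const)
          (hdT'.sub intervalIntegrable_const)
      have e3 : ∫ r in S..T, (r * Ψ r - S * Ψ S)
          = (∫ r in S..T, r * Ψ r) - (T - S) * (S * Ψ S) := by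
        rw [intervalIntegral.integral_sub hST' intervalIntegrable_const,
          intervalIntegral.integral_const, smul_eq_mul]
      rw [e2, e3, ← e1]; ring
    rw [hRHS]
    -- first piece nonneg
    have hA : 0 ≤ ∫ r in S..d, (r * Ψ r - S * Ψ S) := by
      apply intervalIntegral.integral_nonneg hdS
      intro r hr
      rcases eq_or_lt_of_le hS with hS0 | hS0
      · have : 0 ≤ r * Ψ r := mul_nonneg (hS0 ▸ hr.1) (hnonneg r (hS0 ▸ hr.1))
        simp only [← hS0]
        linarith
      · have hk := keyA Ψ Ψ' lam hIntΨ' hFTC hell hS0 hr.1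
        have hΨnn : 0 ≤ ∫ t in S..r, Ψ t :=
          intervalIntegral.integral_nonneg hr.1 (fun u hu => hnonneg u (le_trans hS hu.1))
        linarith [mul_nonneg hl1 hΨnn]
    -- second piece
    have hB : ∫ r in d..T, ((1 + lam) * m * (r - d)) ≤ ∫ r in d..T, (r * Ψ r - S * Ψ S) := by
      apply intervalIntegral.integral_mono_on hdT
        ((continuous_const.mul (continuous_id.sub continuous_const)).intervalIntegrable _ _)
        (hdT'.sub intervalIntegrable_const)
      intro r hr
      simp only [Pi.mul_apply, Pi.sub_apply, id_eq, ← hd]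
      have h5 := keyA Ψ Ψ' lam hIntΨ' hFTC hell hd0 hr.1
      have h6 : S * Ψ S ≤ d * Ψ d := by
        rcases eq_or_lt_of_le hS with hS0 | hS0
        · have : 0 ≤ d * Ψ d := mul_nonneg hd0.le (hnonneg d hd0.le)
          rw [← hS0]; linarith
        · have hk := keyA Ψ Ψ' lam hIntΨ' hFTC hell hS0 hdS
          have hΨnn : 0 ≤ ∫ t in S..d, Ψ t :=
            intervalIntegral.integral_nonneg hdS (fun u hu => hnonneg u (le_trans hS hu.1))
          linarith [mul_nonneg hl1 hΨnn]
      have h7 : m * (r - d) ≤ ∫ t in d..r, Ψ t := by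
        have := intervalIntegral.integral_mono_on hr.1
          (intervalIntegrable_const (c := m))
          (psi_int Ψ Ψ' hIntΨ' hFTC hd0 hr.1)
          (fun t ht => hmle t (le_trans (by rw [hMT]; exact hd3) ht.1)
            (le_trans ht.2 (hMT ▸ hr.2)))
        rwa [intervalIntegral.integral_const, smul_eq_mul, mul_comm] at this
      linarith [mul_le_mul_of_nonneg_left h7 hl1]
    have hC : ∫ r in d..T, ((1 + lam) * m * (r - d)) = (1 + lam) * m * ((T - d) ^ 2 / 2) := by
      rw [intervalIntegral.integral_const_mul]
      congr 1
      have : ∫ r in d..T, (r - d) = ∫ x in d - d..T - d, x :=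
        intervalIntegral.integral_comp_sub_right (fun x => x) d
      rw [this, integral_id]
      ring_nf
    -- final arithmetic
    have harith : (1 + lam) / 9 * |S - T| ^ 2 * m ≤ (1 + lam) * m * ((T - d) ^ 2 / 2) := by
      rw [habs]
      rcases le_total S (T / 3) with hc | hc
      · have hdv : d = T / 3 := max_eq_right hc
        have h1 : (T - S) ^ 2 ≤ T ^ 2 := by nlinarith
        have h2 : 0 ≤ (1 + lam) * m := mul_nonneg hl1 hm0
        rw [hdv]
        linarith [mul_le_mul_of_nonneg_left h1 h2, mul_nonneg h2 (sq_nonneg T)]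
      · have hdv : d = S := max_eq_left hc
        have h2 : 0 ≤ (1 + lam) * m := mul_nonneg hl1 hm0
        rw [hdv]
        linarith [mul_nonneg h2 (sq_nonneg (T - S))]
    calc (1 + lam) / 9 * |S - T| ^ 2 * m ≤ (1 + lam) * m * ((T - d) ^ 2 / 2) := harith
      _ = ∫ r in d..T, ((1 + lam) * m * (r - d)) := hC.symm
      _ ≤ ∫ r in d..T, (r * Ψ r - S * Ψ S) := hB
      _ ≤ (∫ r in S..d, (r * Ψ r - S * Ψ S)) + ∫ r in d..T, (r * Ψ r - S * Ψ S) := by linarith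
  · -- case T ≤ S
    have hMS : M = S := max_eq_left hTS
    have hS0 : 0 < S := hMS ▸ hMpos
    have hsub : ∀ x y : ℝ, 0 ≤ x → y ≤ S → x ≤ y →
        IntervalIntegrable (fun r => r * Ψ r) volume x y := fun x y hx hy hxy =>
      (hint S hS0).mono_set (by rw [uIcc_of_le hxy, uIcc_of_le hS]; exact Icc_subset_Icc hx hy)
    set d := max T (S / 3) with hd
    have hd3 : S / 3 ≤ d := le_max_right _ _
    have hdT : T ≤ d := le_max_left _ _
    have hdS : d ≤ S := max_le hTS (by linarith)
    have hd0 : 0 < d := lt_of_lt_of_le (by linarith) hd3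
    have habs : |S - T| = S - T := abs_of_nonneg (by linarith)
    have h0T := hsub 0 T le_rfl hTS hT
    have hTd := hsub T d hT hdS hdT
    have hdS' := hsub d S hd0.le le_rfl hdS
    have hTS' := hsub T S hT le_rfl hTS
    have hRHS : (∫ r in (0:ℝ)..T, r * Ψ r) - (∫ r in (0:ℝ)..S, r * Ψ r) - S * Ψ S * (T - S)
        = (∫ r in T..d, (S * Ψ S - r * Ψ r)) + ∫ r in d..S, (S * Ψ S - r * Ψ r) := by
      have e1 : (∫ r in (0:ℝ)..T, r * Ψ r) + ∫ r in T..S, r * Ψ r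
          = ∫ r in (0:ℝ)..S, r * Ψ r :=
        intervalIntegral.integral_add_adjacent_intervals h0T hTS'
      have e2 : (∫ r in T..d, (S * Ψ S - r * Ψ r)) + ∫ r in d..S, (S * Ψ S - r * Ψ r)
          = ∫ r in T..S, (S * Ψ S - r * Ψ r) :=
        intervalIntegral.integral_add_adjacent_intervals
          (intervalIntegrable_const.sub hTd) (intervalIntegrable_const.sub hdS')
      have e3 : ∫ r in T..S, (S * Ψ S - r * Ψ r)
          = (S - T) * (S * Ψ S) - ∫ r in T..S, r * Ψ r := by
        rw [intervalIntegral.integral_sub intervalIntegrable_const hTS',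
          intervalIntegral.integral_const, smul_eq_mul]
      rw [e2, e3, ← e1]; ring
    rw [hRHS]
    have hA : 0 ≤ ∫ r in T..d, (S * Ψ S - r * Ψ r) := by
      apply intervalIntegral.integral_nonneg hdT
      intro r hr
      have hr0 : 0 ≤ r := le_trans hT hr.1
      rcases eq_or_lt_of_le hr0 with hr0' | hr0'
      · have : 0 ≤ S * Ψ S := mul_nonneg hS0.le (hnonneg S hS0.le)
        rw [← hr0']; linarith
      · have hk := keyA Ψ Ψ' lam hIntΨ' hFTC hell hr0' (le_trans hr.2 hdS)
        have hΨnn : 0 ≤ ∫ t in r..S, Ψ t :=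
          intervalIntegral.integral_nonneg (le_trans hr.2 hdS)
            (fun u hu => hnonneg u (le_trans hr0 hu.1))
        linarith [mul_nonneg hl1 hΨnn]
    have hB : ∫ r in d..S, ((1 + lam) * m * (S - r)) ≤ ∫ r in d..S, (S * Ψ S - r * Ψ r) := by
      apply intervalIntegral.integral_mono_on hdS
        ((continuous_const.mul (continuous_const.sub continuous_id)).intervalIntegrable _ _)
        (intervalIntegrable_const.sub hdS')
      intro r hr
      simp only [Pi.mul_apply, Pi.sub_apply, id_eq]
      have hr0 : 0 < r := lt_of_lt_of_le hd0 hr.1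
      have h5 := keyA Ψ Ψ' lam hIntΨ' hFTC hell hr0 hr.2
      have h7 : m * (S - r) ≤ ∫ t in r..S, Ψ t := by
        have := intervalIntegral.integral_mono_on hr.2
          (intervalIntegrable_const (c := m))
          (psi_int Ψ Ψ' hIntΨ' hFTC hr0 hr.2)
          (fun t ht => hmle t (le_trans (by rw [hMS]; linarith [hr.1, hd3]) ht.1)
            (hMS ▸ ht.2))
        rwa [intervalIntegral.integral_const, smul_eq_mul, mul_comm] at this
      linarith [mul_le_mul_of_nonneg_left h7 hl1]
    have hC : ∫ r in d..S, ((1 + lam) * m * (S - r)) = (1 + lam) * m * ((S - d) ^ 2 / 2) := by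
      rw [intervalIntegral.integral_const_mul]
      congr 1
      have : ∫ r in d..S, (S - r) = ∫ x in S - S..S - d, x :=
        intervalIntegral.integral_comp_sub_left (fun x => x) S
      rw [this, integral_id]
      ring_nf
    have harith : (1 + lam) / 9 * |S - T| ^ 2 * m ≤ (1 + lam) * m * ((S - d) ^ 2 / 2) := by
      rw [habs]
      rcases le_total T (S / 3) with hc | hc
      · have hdv : d = S / 3 := max_eq_right hc
        have h1 : (S - T) ^ 2 ≤ S ^ 2 := by nlinarith
        have h2 : 0 ≤ (1 + lam) * m := mul_nonneg hl1 hm0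
        rw [hdv]
        linarith [mul_le_mul_of_nonneg_left h1 h2, mul_nonneg h2 (sq_nonneg S)]
      · have hdv : d = T := max_eq_left hc
        have h2 : 0 ≤ (1 + lam) * m := mul_nonneg hl1 hm0
        rw [hdv]
        linarith [mul_nonneg h2 (sq_nonneg (S - T))]
    calc (1 + lam) / 9 * |S - T| ^ 2 * m ≤ (1 + lam) * m * ((S - d) ^ 2 / 2) := harith
      _ = ∫ r in d..S, ((1 + lam) * m * (S - r)) := hC.symm
      _ ≤ ∫ r in d..S, (S * Ψ S - r * Ψ r) := hB
      _ ≤ (∫ r in T..d, (S * Ψ S - r * Ψ r)) + ∫ r in d..S, (S * Ψ S - r * Ψ r) := by linarith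
end

section
/- Let H be a real inner product space, and let Ψ : [0,∞) → [0,∞) be locally absolutely continuous on (0,∞) with tΨ'(t) ≥ λΨ(t) for a.e. t > 0, where -1 < λ ≤ 0. Then for all v, w ∈ H: ⟨Ψ(‖v‖)v - Ψ(‖w‖)w , v - w⟩ ≥ ((1+λ)/4) · ‖v - w‖² · Ψ((‖v‖ ∨ ‖w‖)/2). -/
open MeasureTheory Set

private lemma triangle_swap (f : ℝ → ℝ) {a b : ℝ} (hab : a ≤ b)
    (hf : IntegrableOn f (Set.Ioc a b)) :
    ∫ u in a..b, (∫ s in a..u, f s) = ∫ s in a..b, (b - s) * f s := by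
  set μ := volume.restrict (Ioc a b) with hμdef
  have hfin : IsFiniteMeasure μ := by
    constructor
    rw [hμdef, Measure.restrict_apply_univ, Real.volume_Ioc]
    exact ENNReal.ofReal_lt_top
  have h1 : Integrable (fun p : ℝ × ℝ => f p.2) (μ.prod μ) := by
    have := (integrable_const (1:ℝ) (μ := μ)).mul_prod hf
    simpa using this
  have hFi : Integrable (fun p : ℝ × ℝ => if p.2 ≤ p.1 then f p.2 else 0) (μ.prod μ) := by
    have := h1.indicator (measurableSet_le measurable_snd measurable_fst)
    refine this.congr (Filter.Eventually.of_forall fun p => ?_); simp [Set.indicator_apply]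
  have hswap := MeasureTheory.integral_integral_swap
    (f := fun u s => if s ≤ u then f s else 0) (μ := μ) (ν := μ) hFi
  have hL : ∫ u in a..b, (∫ s in a..u, f s)
      = ∫ u, (∫ s, (if s ≤ u then f s else 0) ∂μ) ∂μ := by
    rw [intervalIntegral.integral_of_le hab]
    refine setIntegral_congr_fun measurableSet_Ioc (fun u hu => ?_)
    have : (fun s => if s ≤ u then f s else 0) = (Iic u).indicator f := by
      funext s; simp [Set.indicator_apply]
    rw [hμdef, this, setIntegral_indicator measurableSet_Iic, Ioc_inter_Iic,
      min_eq_right hu.2, intervalIntegral.integral_of_le (le_of_lt hu.1)]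
  have hR : ∫ s, (∫ u, (if s ≤ u then f s else 0) ∂μ) ∂μ
      = ∫ s in a..b, (b - s) * f s := by
    rw [intervalIntegral.integral_of_le hab, hμdef]
    refine setIntegral_congr_fun measurableSet_Ioc (fun s hs => ?_)
    have h2 : (fun u => if s ≤ u then f s else 0) = (Ici s).indicator (fun _ => f s) := by
      funext u; simp [Set.indicator_apply]
    have h3 : Ioc a b ∩ Ici s = Icc s b := by
      ext u
      simp only [mem_inter_iff, mem_Ioc, mem_Ici, mem_Icc]
      exact ⟨fun h => ⟨h.2, h.1.2⟩, fun h => ⟨⟨lt_of_lt_of_le hs.1 h.1, h.2⟩, h.1⟩⟩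
    rw [h2, setIntegral_indicator measurableSet_Ici, h3, setIntegral_const,
      Real.volume_real_Icc_of_le hs.2, smul_eq_mul]
  rw [hL, hswap, hR]

section Scalar
variable (Ψ Ψ' : ℝ → ℝ) (lam : ℝ)
variable (hlam : -1 < lam) (hlam0 : lam ≤ 0)
variable (hnonneg : ∀ t : ℝ, 0 ≤ t → 0 ≤ Ψ t)
variable (hInt : ∀ a b : ℝ, 0 < a → 0 < b → IntervalIntegrable Ψ' volume a b)
variable (hFTC : ∀ a b : ℝ, 0 < a → a ≤ b → Ψ b - Ψ a = ∫ t in a..b, Ψ' t)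
variable (hell : ∀ᵐ t ∂(volume.restrict (Ioi (0:ℝ))), lam * Ψ t ≤ t * Ψ' t)

include hInt hFTC in
private lemma psi_contOn {a b : ℝ} (ha : 0 < a) (hab : a ≤ b) :
    ContinuousOn Ψ (Icc a b) := by
  have hint : IntegrableOn Ψ' (uIcc a b) volume := by
    rw [uIcc_of_le hab]
    exact (intervalIntegrable_iff_integrableOn_Icc_of_le hab).mp
      (hInt a b ha (lt_of_lt_of_le ha hab))
  have hc : ContinuousOn (fun x => Ψ a + ∫ t in a..x, Ψ' t) (uIcc a b) :=
    continuousOn_const.add (intervalIntegral.continuousOn_primitive_interval hint)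
  rw [← uIcc_of_le hab]
  refine ContinuousOn.congr hc (fun x hx => ?_)
  rw [uIcc_of_le hab] at hx
  have := hFTC a x ha hx.1
  linarith [this]

include hInt hFTC in
private lemma psi_intInt {a b : ℝ} (ha : 0 < a) (hab : a ≤ b) :
    IntervalIntegrable Ψ volume a b := by
  have := (psi_contOn Ψ Ψ' hInt hFTC ha hab)
  rw [← uIcc_of_le hab] at this
  exact this.intervalIntegrable

include hInt hFTC hell in
private lemma lemA {a b : ℝ} (ha : 0 < a) (hab : a ≤ b) :
    (1 + lam) * ∫ u in a..b, Ψ u ≤ b * Ψ b - a * Ψ a := by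
  have hb : 0 < b := lt_of_lt_of_le ha hab
  have hIΨ : IntervalIntegrable Ψ volume a b := psi_intInt Ψ Ψ' hInt hFTC ha hab
  have hIΨ' : IntervalIntegrable Ψ' volume a b := hInt a b ha hb
  have hIuΨ' : IntervalIntegrable (fun u => u * Ψ' u) volume a b :=
    hIΨ'.continuousOn_mul continuousOn_id
  -- identity : b * Ψ b - a * Ψ a = ∫ (Ψ u + u * Ψ' u)
  have hprimInt : IntervalIntegrable (fun u => ∫ s in a..u, Ψ' s) volume a b := by
    have : ContinuousOn (fun u => ∫ s in a..u, Ψ' s) (uIcc a b) := by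
      apply intervalIntegral.continuousOn_primitive_interval
      rw [uIcc_of_le hab]
      exact (intervalIntegrable_iff_integrableOn_Icc_of_le hab).mp hIΨ'
    exact this.intervalIntegrable
  have hΨdecomp : ∫ u in a..b, Ψ u
      = (b - a) * Ψ a + ∫ u in a..b, (∫ s in a..u, Ψ' s) := by
    have h1 : ∫ u in a..b, Ψ u = ∫ u in a..b, (Ψ a + ∫ s in a..u, Ψ' s) := by
      apply intervalIntegral.integral_congr
      intro u hu
      rw [uIcc_of_le hab] at hu
      have := hFTC a u ha hu.1
      dsimp only; linarith
    rw [h1, intervalIntegral.integral_add (by simp) hprimInt]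
    simp [mul_comm]
  have hswap : ∫ u in a..b, (∫ s in a..u, Ψ' s) = ∫ s in a..b, (b - s) * Ψ' s := by
    exact triangle_swap _ hab ((intervalIntegrable_iff_integrableOn_Ioc_of_le hab).mp hIΨ')
  have hident : b * Ψ b - a * Ψ a = ∫ u in a..b, (Ψ u + u * Ψ' u) := by
    rw [intervalIntegral.integral_add hIΨ hIuΨ', hΨdecomp, hswap]
    have hbs : IntervalIntegrable (fun s => (b - s) * Ψ' s) volume a b :=
      hIΨ'.continuousOn_mul (by fun_prop)
    have : (∫ s in a..b, (b - s) * Ψ' s) + (∫ u in a..b, u * Ψ' u)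
        = b * ∫ s in a..b, Ψ' s := by
      rw [← intervalIntegral.integral_add hbs hIuΨ', ← intervalIntegral.integral_const_mul]
      apply intervalIntegral.integral_congr
      intro u _; ring
    have hftc := hFTC a b ha hab
    have hb2 : b * (Ψ b - Ψ a) = b * ∫ s in a..b, Ψ' s := by rw [hftc]
    linarith [this]
  rw [hident]
  have hmono : ∫ u in a..b, (1 + lam) * Ψ u ≤ ∫ u in a..b, (Ψ u + u * Ψ' u) := by
    apply intervalIntegral.integral_mono_ae_restrict hab (hIΨ.const_mul _) (hIΨ.add hIuΨ')
    have hsub : Icc a b ⊆ Ioi (0:ℝ) := fun x hx => lt_of_lt_of_le ha hx.1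
    filter_upwards [ae_restrict_of_ae_restrict_of_subset hsub hell] with t ht
    linarith
  calc (1 + lam) * ∫ u in a..b, Ψ u = ∫ u in a..b, (1 + lam) * Ψ u := by
        rw [intervalIntegral.integral_const_mul]
    _ ≤ _ := hmono


include hlam hnonneg hInt hFTC hell in
private lemma mono_tPsi {s t : ℝ} (hs : 0 ≤ s) (hst : s ≤ t) :
    s * Ψ s ≤ t * Ψ t := by
  rcases eq_or_lt_of_le hs with h0 | h0
  · have ht : 0 ≤ t := le_trans hs hst
    have := mul_nonneg ht (hnonneg t ht)
    rw [← h0]; simpa using this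
  · have hA := lemA Ψ Ψ' lam hInt hFTC hell h0 hst
    have hIΨ : 0 ≤ ∫ u in s..t, Ψ u :=
      intervalIntegral.integral_nonneg hst (fun u hu => hnonneg u (hs.trans hu.1))
    nlinarith [mul_nonneg (by linarith : (0:ℝ) ≤ 1 + lam) hIΨ]


include hlam hnonneg hInt hFTC hell in
private lemma lower_int {t a : ℝ} (ht : 0 < t) (ha : t / 2 ≤ a) (hat : a ≤ t) :
    (t - a) * (Ψ (t / 2) / 2) ≤ ∫ u in a..t, Ψ u := by
  have hm : 0 < t / 2 := by linarith
  have ha0 : 0 < a := lt_of_lt_of_le hm ha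
  have hint := psi_intInt Ψ Ψ' hInt hFTC ha0 hat
  have hconst : IntervalIntegrable (fun _ : ℝ => Ψ (t / 2) / 2) volume a t :=
    intervalIntegrable_const
  have hstep : ∀ u ∈ Icc a t, Ψ (t / 2) / 2 ≤ Ψ u := by
    intro u hu
    have hu0 : 0 < u := lt_of_lt_of_le ha0 hu.1
    have hmu := mono_tPsi Ψ Ψ' lam hlam hnonneg hInt hFTC hell hm.le (le_trans ha hu.1)
    have hc0 : 0 ≤ Ψ (t / 2) := hnonneg _ hm.le
    nlinarith [hu.2]
  have := intervalIntegral.integral_mono_on hat hconst hint hstep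
  simpa [mul_div_assoc] using this

include hlam hnonneg hInt hFTC hell in
private lemma keyS {s t : ℝ} (hs : 0 ≤ s) (hst : s ≤ t) :
    ((1 + lam) / 4) * (t - s) ^ 2 * Ψ (t / 2) ≤ (t * Ψ t - s * Ψ s) * (t - s) := by
  rcases eq_or_lt_of_le (hs.trans hst) with ht0 | ht0
  · have : s = 0 := le_antisymm (hst.trans ht0.symm.le) hs
    rw [← ht0, this]; simp
  set m := t / 2 with hm
  have hm0 : 0 < m := by positivity
  set c := Ψ m with hc
  have hc0 : 0 ≤ c := hnonneg _ hm0.le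
  have hl1 : 0 ≤ 1 + lam := by linarith
  rcases le_or_gt m s with hms | hms
  · have hA := lemA Ψ Ψ' lam hInt hFTC hell (lt_of_lt_of_le hm0 hms) hst
    have hL := lower_int Ψ Ψ' lam hlam hnonneg hInt hFTC hell ht0 hms hst
    have h2 : (1 + lam) * ((t - s) * (c / 2)) ≤ (1 + lam) * ∫ u in s..t, Ψ u :=
      mul_le_mul_of_nonneg_left hL hl1
    nlinarith [sq_nonneg (t - s), mul_nonneg (mul_nonneg hl1 (sub_nonneg.mpr hst)) hc0,
      mul_le_mul_of_nonneg_right (le_trans h2 hA) (sub_nonneg.mpr hst)]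
  · have h0 := mono_tPsi Ψ Ψ' lam hlam hnonneg hInt hFTC hell hs hms.le
    have hA := lemA Ψ Ψ' lam hInt hFTC hell hm0 (by linarith : m ≤ t)
    have hL := lower_int Ψ Ψ' lam hlam hnonneg hInt hFTC hell ht0 le_rfl (by linarith)
    have h2 : (1 + lam) * ((t - m) * (c / 2)) ≤ (1 + lam) * ∫ u in m..t, Ψ u :=
      mul_le_mul_of_nonneg_left hL hl1
    have hD : (1 + lam) * t * c / 4 ≤ t * Ψ t - s * Ψ s := by
      have : t - m = t / 2 := by rw [hm]; ring
      nlinarith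
    have hts : t - s ≤ t := by linarith
    nlinarith [mul_le_mul_of_nonneg_right hD (sub_nonneg.mpr hst),
      mul_nonneg (mul_nonneg hl1 hc0) (mul_nonneg (sub_nonneg.mpr hst) (by linarith : 0 ≤ t - (t - s)))]

end Scalar

/-- Effective monotonicity in a real inner product space: under the ellipticity lower
bound with `-1 < λ ≤ 0`, for all `v, w ∈ H`,
`⟨Ψ(‖v‖)v - Ψ(‖w‖)w, v-w⟩ ≥ ((1+λ)/4)‖v-w‖²Ψ((‖v‖∨‖w‖)/2)`. -/
theorem stmt_8 {H : Type*} [NormedAddCommGroup H] [InnerProductSpace ℝ H]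
    (Ψ Ψ' : ℝ → ℝ) (lam : ℝ)
    (hlam : -1 < lam) (hlam0 : lam ≤ 0)
    (hnonneg : ∀ t : ℝ, 0 ≤ t → 0 ≤ Ψ t)
    (hInt : ∀ a b : ℝ, 0 < a → 0 < b → IntervalIntegrable Ψ' volume a b)
    (hFTC : ∀ a b : ℝ, 0 < a → a ≤ b → Ψ b - Ψ a = ∫ t in a..b, Ψ' t)
    (hell : ∀ᵐ t ∂(volume.restrict (Ioi (0:ℝ))), lam * Ψ t ≤ t * Ψ' t) :
    ∀ v w : H,
      ((1 + lam) / 4) * ‖v - w‖ ^ 2 * Ψ (max ‖v‖ ‖w‖ / 2) ≤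
        inner ℝ (Ψ ‖v‖ • v - Ψ ‖w‖ • w) (v - w) := by
  have main : ∀ v w : H, ‖w‖ ≤ ‖v‖ →
      ((1 + lam) / 4) * ‖v - w‖ ^ 2 * Ψ (max ‖v‖ ‖w‖ / 2) ≤
        inner ℝ (Ψ ‖v‖ • v - Ψ ‖w‖ • w) (v - w) := by
    intro v w hwv
    set t := ‖v‖ with ht
    set s := ‖w‖ with hs
    have hs0 : 0 ≤ s := norm_nonneg w
    have ht0 : 0 ≤ t := norm_nonneg v
    have hmax : max t s = t := max_eq_left hwv
    rw [hmax]
    obtain ⟨ip, hip⟩ : ∃ r : ℝ, (inner ℝ v w : ℝ) = r := ⟨_, rfl⟩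
    have hexp : (inner ℝ (Ψ t • v - Ψ s • w) (v - w) : ℝ)
        = Ψ t * t ^ 2 - (Ψ t + Ψ s) * ip + Ψ s * s ^ 2 := by
      have hip2 : (inner ℝ w v : ℝ) = ip := by rw [real_inner_comm]; exact hip
      simp only [inner_sub_left, inner_sub_right, real_inner_smul_left,
        real_inner_self_eq_norm_sq, hip, hip2, ← ht, ← hs]
      ring
    have hnorm : ‖v - w‖ ^ 2 = t ^ 2 - 2 * ip + s ^ 2 := by
      have := norm_sub_sq_real v w
      rw [hip, ← ht, ← hs] at this
      exact this
    have hCS : ip ≤ t * s := by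
      have := real_inner_le_norm v w
      rw [hip, ← ht, ← hs] at this
      exact this
    rcases eq_or_lt_of_le ht0 with ht0' | ht0'
    · have hv : v = 0 := norm_eq_zero.mp (by rw [← ht]; exact ht0'.symm)
      have hw : w = 0 := norm_eq_zero.mp
        (by rw [← hs]; exact le_antisymm (ht0' ▸ hwv) hs0)
      simp [hv, hw]
    have hkey := keyS Ψ Ψ' lam hlam hnonneg hInt hFTC hell hs0 hwv
    have hΨt : 0 ≤ Ψ t := hnonneg t ht0
    have hΨs : 0 ≤ Ψ s := hnonneg s hs0
    have hc0 : 0 ≤ Ψ (t / 2) := hnonneg _ (by linarith)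
    have hhalf : Ψ (t / 2) ≤ 2 * Ψ t := by
      have := mono_tPsi Ψ Ψ' lam hlam hnonneg hInt hFTC hell
        (by linarith : (0:ℝ) ≤ t / 2) (by linarith : t / 2 ≤ t)
      nlinarith
    rw [hexp, hnorm]
    have hl1 : 0 ≤ 1 + lam := by linarith
    have hprod : 0 ≤ (t * s - ip) * (2 * Ψ t - Ψ (t / 2)) :=
      mul_nonneg (by linarith) (by linarith)
    nlinarith [hkey, mul_nonneg (sub_nonneg.mpr hCS) hΨs,
      mul_nonneg (sub_nonneg.mpr hCS) hc0,
      mul_nonneg (mul_nonneg hl1 (sub_nonneg.mpr hCS)) hc0]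
  intro v w
  rcases le_total ‖w‖ ‖v‖ with h | h
  · exact main v w h
  · have hm := main w v h
    have e1 : (inner ℝ (Ψ ‖w‖ • w - Ψ ‖v‖ • v) (w - v) : ℝ)
        = inner ℝ (Ψ ‖v‖ • v - Ψ ‖w‖ • w) (v - w) := by
      rw [show Ψ ‖w‖ • w - Ψ ‖v‖ • v = -(Ψ ‖v‖ • v - Ψ ‖w‖ • w) by abel,
        show w - v = -(v - w) by abel, inner_neg_neg]
    rw [e1, max_comm, norm_sub_rev] at hm
    exact hm
end

section
/- Let H be a real inner product space, Ψ : [0,∞) → [0,∞) locally absolutely continuous on (0,∞) with tΨ'(t) ≥ λΨ(t) a.e. for some -1 < λ ≤ 0, and Φ(T) := ∫₀ᵀ rΨ(r) dr. Then for all v, w ∈ H: Φ(‖v‖) - Φ(‖w‖) - Ψ(‖w‖)⟨w, v - w⟩ ≥ ((1+λ)/36) · ‖v - w‖² · inf{ Ψ(r) : (‖v‖∨‖w‖)/3 ≤ r ≤ ‖v‖∨‖w‖ }. -/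
open MeasureTheory Set intervalIntegral

section EffectiveMonotonicityAux

lemma bern_aux {x p : ℝ} (hx0 : 0 ≤ x) (hx1 : x ≤ 1) (hp0 : 0 ≤ p) (hp1 : p ≤ 1) :
    x ^ p ≤ 1 - p + p * x := by
  have h := Real.geom_mean_le_arith_mean2_weighted hp0 (by linarith : (0:ℝ) ≤ 1 - p) hx0
    zero_le_one (by ring)
  rw [Real.one_rpow, mul_one] at h
  linarith

lemma bern_mul {r a p : ℝ} (hr : 0 < r) (ha : 0 ≤ a) (har : a ≤ r)
    (hp0 : 0 < p) (hp1 : p ≤ 1) :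
    r * (a / r) ^ p ≤ r - p * (r - a) := by
  have hx0 : 0 ≤ a / r := by positivity
  have hx1 : a / r ≤ 1 := (div_le_one hr).2 har
  have hb := bern_aux hx0 hx1 hp0.le hp1
  have hxr : a / r * r = a := div_mul_cancel₀ a hr.ne'
  calc r * (a / r) ^ p ≤ r * (1 - p + p * (a / r)) :=
        mul_le_mul_of_nonneg_left hb hr.le
    _ = r - p * r + p * (a / r * r) := by ring
    _ = r - p * (r - a) := by rw [hxr]; ring

lemma psi_contAt {Ψ Ψ' : ℝ → ℝ}
    (hIntΨ' : ∀ a b : ℝ, 0 < a → 0 < b → IntervalIntegrable Ψ' volume a b)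
    (hFTC : ∀ a b : ℝ, 0 < a → a ≤ b → Ψ b - Ψ a = ∫ t in a..b, Ψ' t) :
    ∀ t : ℝ, 0 < t → ContinuousAt Ψ t := by
  intro t ht
  have hs : (0:ℝ) < t/2 := by linarith
  have hint : IntervalIntegrable Ψ' volume (t/2) (t+1) := hIntΨ' _ _ hs (by linarith)
  have hconM : ContinuousOn (fun x => ∫ r in (t/2)..x, Ψ' r) (uIcc (t/2) (t+1)) :=
    continuousOn_primitive_interval' hint left_mem_uIcc
  rw [uIcc_of_le (by linarith)] at hconM
  have heq : EqOn (fun x => Ψ (t/2) + ∫ r in (t/2)..x, Ψ' r) Ψ (Icc (t/2) (t+1)) := by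
    intro x hx
    have := hFTC (t/2) x hs hx.1
    simp only
    linarith
  have hcont : ContinuousOn Ψ (Icc (t/2) (t+1)) :=
    (continuousOn_const.add hconM).congr heq.symm
  exact hcont.continuousAt (Icc_mem_nhds (by linarith) (by linarith))

lemma key_mono {Ψ Ψ' : ℝ → ℝ} {lam : ℝ}
    (hlam : -1 < lam) (hlam0 : lam ≤ 0)
    (hΨAt : ∀ x : ℝ, 0 < x → ContinuousAt Ψ x)
    (hIntΨ' : ∀ a b : ℝ, 0 < a → 0 < b → IntervalIntegrable Ψ' volume a b)
    (hFTC : ∀ a b : ℝ, 0 < a → a ≤ b → Ψ b - Ψ a = ∫ t in a..b, Ψ' t)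
    (hell : ∀ᵐ t ∂(volume.restrict (Ioi (0:ℝ))), lam * Ψ t ≤ t * Ψ' t) :
    ∀ s t : ℝ, 0 < s → s ≤ t → s ^ (-lam) * Ψ s ≤ t ^ (-lam) * Ψ t := by
  intro s t hs hst
  set c : ℝ := -lam with hcdef
  have hc0 : 0 ≤ c := neg_nonneg.2 hlam0
  have hΨOn : ∀ x y : ℝ, 0 < x → ContinuousOn Ψ (Icc x y) :=
    fun x y hx r hr => (hΨAt r (lt_of_lt_of_le hx hr.1)).continuousWithinAt
  set g : ℝ → ℝ := fun r => c * Ψ r / r with hgdef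
  have hgIoi : ContinuousOn g (Ioi (0:ℝ)) := by
    apply ContinuousOn.div
    · exact continuousOn_const.mul (fun r hr => (hΨAt r hr).continuousWithinAt)
    · exact continuousOn_id
    · exact fun r hr => ne_of_gt hr
  have hgOn : ∀ x y : ℝ, 0 < x → ContinuousOn g (Icc x y) := by
    intro x y hx
    exact hgIoi.mono (fun r hr => lt_of_lt_of_le hx hr.1)
  have hgInt : ∀ x y : ℝ, 0 < x → x ≤ y → IntervalIntegrable g volume x y := by
    intro x y hx hxy
    have := hgOn x y hx
    rw [← uIcc_of_le hxy] at this
    exact this.intervalIntegrable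
  set φ : ℝ → ℝ := fun x => ∫ r in s..x, g r with hφdef
  have hφs : φ s = 0 := integral_same
  set u : ℝ → ℝ := fun x => Ψ x + φ x with hudef
  -- u is nondecreasing on [s, ∞)
  have humono : ∀ x y : ℝ, s ≤ x → x ≤ y → u x ≤ u y := by
    intro x y hsx hxy
    have hx0 : 0 < x := lt_of_lt_of_le hs hsx
    have hy0 : 0 < y := lt_of_lt_of_le hx0 hxy
    have hΨeq : Ψ y - Ψ x = ∫ r in x..y, Ψ' r := hFTC x y hx0 hxy
    have hφeq : φ y - φ x = ∫ r in x..y, g r := by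
      have h1 := integral_add_adjacent_intervals (hgInt s x hs hsx) (hgInt x y hx0 hxy)
      simp only [hφdef]
      linarith [h1]
    have hsum : u y - u x = ∫ r in x..y, (Ψ' r + g r) := by
      rw [integral_add (hIntΨ' x y hx0 hy0) (hgInt x y hx0 hxy)]
      simp only [hudef]
      linarith
    have hnn : 0 ≤ ∫ r in x..y, (Ψ' r + g r) := by
      apply integral_nonneg_of_ae_restrict hxy
      have h4 : ∀ᵐ r ∂(volume.restrict (Icc x y)), lam * Ψ r ≤ r * Ψ' r :=
        ae_restrict_of_ae_restrict_of_subset (fun r hr => lt_of_lt_of_le hx0 hr.1) hell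
      have h5 : ∀ᵐ r ∂(volume.restrict (Icc x y)), r ∈ Icc x y :=
        ae_restrict_mem measurableSet_Icc
      filter_upwards [h4, h5] with r h1 h2
      have hr0 : 0 < r := lt_of_lt_of_le hx0 h2.1
      have heq : Ψ' r + g r = (r * Ψ' r - lam * Ψ r) / r := by
        simp only [hgdef, hcdef]
        field_simp
        ring
      simp only [Pi.zero_apply, heq]
      exact div_nonneg (by linarith) hr0.le
    linarith
  -- derivative facts
  have hφderiv : ∀ x : ℝ, s ≤ x → HasDerivAt φ (g x) x := by
    intro x hsx
    have hx0 : 0 < x := lt_of_lt_of_le hs hsx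
    apply integral_hasDerivAt_right (hgInt s x hs hsx)
    · exact ⟨Ioi 0, Ioi_mem_nhds hx0, hgIoi.aestronglyMeasurable measurableSet_Ioi⟩
    · exact hgIoi.continuousAt (Ioi_mem_nhds hx0)
  have hrpow : ∀ x : ℝ, 0 < x → HasDerivAt (fun r : ℝ => r ^ c) (c * x ^ (c - 1)) x :=
    fun x hx => Real.hasDerivAt_rpow_const (Or.inl hx.ne')
  have hφcont : ContinuousOn φ (Icc s t) :=
    fun x hx => (hφderiv x hx.1).continuousAt.continuousWithinAt
  have hxc1 : ContinuousOn (fun x : ℝ => c * x ^ (c - 1)) (Icc s t) :=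
    continuousOn_const.mul (continuousOn_id.rpow_const
      (fun x hx => Or.inl (ne_of_gt (lt_of_lt_of_le hs hx.1))))
  have hxc : ContinuousOn (fun x : ℝ => x ^ c) (Icc s t) :=
    continuousOn_id.rpow_const (fun x hx => Or.inl (ne_of_gt (lt_of_lt_of_le hs hx.1)))
  -- integration by parts identity for φ
  have hpderiv : ∀ x ∈ uIcc s t,
      HasDerivAt (fun r => r ^ c * φ r) (c * x ^ (c - 1) * φ x + x ^ c * g x) x := by
    intro x hx
    rw [uIcc_of_le hst] at hx
    exact (hrpow x (lt_of_lt_of_le hs hx.1)).mul (hφderiv x hx.1)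
  have hparts : ∫ x in s..t, (c * x ^ (c - 1) * φ x + x ^ c * g x)
      = t ^ c * φ t - s ^ c * φ s := by
    apply integral_eq_sub_of_hasDerivAt hpderiv
    have : ContinuousOn (fun x => c * x ^ (c - 1) * φ x + x ^ c * g x) (Icc s t) :=
      (hxc1.mul hφcont).add (hxc.mul (hgOn s t hs))
    rw [← uIcc_of_le hst] at this
    exact this.intervalIntegrable
  have hrint : ∫ x in s..t, c * x ^ (c - 1) = t ^ c - s ^ c := by
    apply integral_eq_sub_of_hasDerivAt
    · intro x hx
      rw [uIcc_of_le hst] at hx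
      exact hrpow x (lt_of_lt_of_le hs hx.1)
    · have := hxc1
      rw [← uIcc_of_le hst] at this
      exact this.intervalIntegrable
  -- integrabilities
  have intφ : IntervalIntegrable (fun x => c * x ^ (c - 1) * φ x) volume s t := by
    have := hxc1.mul hφcont; rw [← uIcc_of_le hst] at this; exact this.intervalIntegrable
  have intΨc : IntervalIntegrable (fun x => c * x ^ (c - 1) * Ψ x) volume s t := by
    have := hxc1.mul (hΨOn s t hs); rw [← uIcc_of_le hst] at this; exact this.intervalIntegrable
  have intu : IntervalIntegrable (fun x => c * x ^ (c - 1) * u x) volume s t := by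
    have : ContinuousOn (fun x => c * x ^ (c - 1) * u x) (Icc s t) :=
      hxc1.mul ((hΨOn s t hs).add hφcont)
    rw [← uIcc_of_le hst] at this; exact this.intervalIntegrable
  set A := ∫ x in s..t, c * x ^ (c - 1) * Ψ x with hA
  set B := ∫ x in s..t, c * x ^ (c - 1) * φ x with hB
  -- the φ-parts integral splits as B + A
  have hcongr : ∫ x in s..t, (c * x ^ (c - 1) * φ x + x ^ c * g x) = B + A := by
    rw [hA, hB, ← integral_add intφ intΨc]
    apply integral_congr
    intro x hx
    rw [uIcc_of_le hst] at hx
    have hx0 : 0 < x := lt_of_lt_of_le hs hx.1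
    have hxc' : x ^ c * g x = c * x ^ (c - 1) * Ψ x := by
      simp only [hgdef]
      rw [Real.rpow_sub hx0, Real.rpow_one]
      field_simp
    simp only [hxc']
  have h6 : t ^ c * φ t = B + A := by
    rw [← hcongr, hparts, hφs]; ring
  have h7 : ∫ x in s..t, c * x ^ (c - 1) * u x = A + B := by
    rw [hA, hB, ← integral_add intΨc intφ]
    apply integral_congr
    intro x hx
    simp only [hudef]
    ring
  have hmono_int : ∫ x in s..t, c * x ^ (c - 1) * u x ≤ (t ^ c - s ^ c) * u t := by
    have step : ∫ x in s..t, c * x ^ (c - 1) * u x ≤ ∫ x in s..t, c * x ^ (c - 1) * u t := by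
      apply integral_mono_on hst intu
      · have : ContinuousOn (fun x => c * x ^ (c - 1) * u t) (Icc s t) := hxc1.mul continuousOn_const
        rw [← uIcc_of_le hst] at this; exact this.intervalIntegrable
      · intro x hx
        have hx0 : 0 ≤ x := le_trans hs.le hx.1
        exact mul_le_mul_of_nonneg_left (humono x t hx.1 hx.2)
          (mul_nonneg hc0 (Real.rpow_nonneg hx0 _))
    calc ∫ x in s..t, c * x ^ (c - 1) * u x ≤ ∫ x in s..t, c * x ^ (c - 1) * u t := step
      _ = (∫ x in s..t, c * x ^ (c - 1)) * u t := by rw [intervalIntegral.integral_mul_const]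
      _ = (t ^ c - s ^ c) * u t := by rw [hrint]
  have E1 : t ^ c * u t = t ^ c * Ψ t + t ^ c * φ t := by simp only [hudef]; ring
  have E5 : s ^ c * u s ≤ s ^ c * u t :=
    mul_le_mul_of_nonneg_left (humono s t le_rfl hst) (Real.rpow_nonneg hs.le _)
  have E6 : u s = Ψ s := by simp only [hudef, hφs]; ring
  have E7 : t ^ c * u t - (t ^ c - s ^ c) * u t = s ^ c * u t := by ring
  have E6' : s ^ c * u s = s ^ c * Ψ s := by rw [E6]
  linarith [hmono_int, h6, h7, E1, E5, E6', E7]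

lemma pt_le {Ψ : ℝ → ℝ} {lam : ℝ}
    (hlam : -1 < lam) (hlam0 : lam ≤ 0)
    (hnonneg : ∀ t : ℝ, 0 ≤ t → 0 ≤ Ψ t)
    (key : ∀ s t : ℝ, 0 < s → s ≤ t → s ^ (-lam) * Ψ s ≤ t ^ (-lam) * Ψ t)
    {a r : ℝ} (ha : 0 ≤ a) (har : a ≤ r) :
    (1 + lam) * (r - a) * Ψ r ≤ r * Ψ r - a * Ψ a := by
  rcases eq_or_lt_of_le ha with h0 | ha'
  · have hr0 : 0 ≤ r := le_trans ha har
    have hΨr := hnonneg r hr0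
    rw [← h0]
    nlinarith [mul_nonneg hr0 hΨr]
  · have hr0 : 0 < r := lt_of_lt_of_le ha' har
    have hΨr := hnonneg r hr0.le
    have hk := key a r ha' har
    have hp0 : (0:ℝ) < 1 + lam := by linarith
    have hb2 := bern_mul hr0 ha har hp0 (by linarith : 1 + lam ≤ 1)
    -- a * Ψ a ≤ r * (a/r)^(1+lam) * Ψ r
    have ha_split : a = a ^ (1 + lam) * a ^ (-lam) := by
      rw [← Real.rpow_add ha']
      norm_num
    have hrr : r ^ (-lam) = r / r ^ (1 + lam) := by
      have h := Real.rpow_sub hr0 1 (1 + lam)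
      rw [Real.rpow_one] at h
      rw [show -lam = 1 - (1 + lam) by ring, h]
    have hpow : a ^ (1 + lam) * r ^ (-lam) = r * (a / r) ^ (1 + lam) := by
      rw [Real.div_rpow ha'.le hr0.le, hrr]
      ring
    have h1 : a * Ψ a ≤ r * (a / r) ^ (1 + lam) * Ψ r := by
      calc a * Ψ a = a ^ (1 + lam) * (a ^ (-lam) * Ψ a) := by
            rw [← mul_assoc, ← ha_split]
        _ ≤ a ^ (1 + lam) * (r ^ (-lam) * Ψ r) :=
            mul_le_mul_of_nonneg_left hk (Real.rpow_nonneg ha'.le _)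
        _ = a ^ (1 + lam) * r ^ (-lam) * Ψ r := by ring
        _ = r * (a / r) ^ (1 + lam) * Ψ r := by rw [hpow]
    nlinarith [mul_le_mul_of_nonneg_right hb2 hΨr]

lemma pt_ge {Ψ : ℝ → ℝ} {lam : ℝ}
    (hlam : -1 < lam) (hlam0 : lam ≤ 0)
    (hnonneg : ∀ t : ℝ, 0 ≤ t → 0 ≤ Ψ t)
    (key : ∀ s t : ℝ, 0 < s → s ≤ t → s ^ (-lam) * Ψ s ≤ t ^ (-lam) * Ψ t)
    {r a : ℝ} (hr : 0 ≤ r) (hra : r ≤ a) :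
    (1 + lam) * (a - r) * Ψ a ≤ a * Ψ a - r * Ψ r := by
  rcases eq_or_lt_of_le hr with h0 | hr'
  · have ha0 : 0 ≤ a := le_trans hr hra
    have hΨa := hnonneg a ha0
    rw [← h0]
    nlinarith [mul_nonneg ha0 hΨa]
  · have ha0 : 0 < a := lt_of_lt_of_le hr' hra
    have hΨa := hnonneg a ha0.le
    have hk := key r a hr' hra
    have hp0 : (0:ℝ) < 1 + lam := by linarith
    have hb2 := bern_mul ha0 hr hra hp0 (by linarith : 1 + lam ≤ 1)
    have hr_split : r = r ^ (1 + lam) * r ^ (-lam) := by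
      rw [← Real.rpow_add hr']
      norm_num
    have haa : a ^ (-lam) = a / a ^ (1 + lam) := by
      have h := Real.rpow_sub ha0 1 (1 + lam)
      rw [Real.rpow_one] at h
      rw [show -lam = 1 - (1 + lam) by ring, h]
    have hpow : r ^ (1 + lam) * a ^ (-lam) = a * (r / a) ^ (1 + lam) := by
      rw [Real.div_rpow hr'.le ha0.le, haa]
      ring
    have h1 : r * Ψ r ≤ a * (r / a) ^ (1 + lam) * Ψ a := by
      calc r * Ψ r = r ^ (1 + lam) * (r ^ (-lam) * Ψ r) := by
            rw [← mul_assoc, ← hr_split]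
        _ ≤ r ^ (1 + lam) * (a ^ (-lam) * Ψ a) :=
            mul_le_mul_of_nonneg_left hk (Real.rpow_nonneg hr'.le _)
        _ = r ^ (1 + lam) * a ^ (-lam) * Ψ a := by ring
        _ = a * (r / a) ^ (1 + lam) * Ψ a := by rw [hpow]
    nlinarith [mul_le_mul_of_nonneg_right hb2 hΨa]

lemma caseA_arith {lam a b I m P J : ℝ} (hlam : -1 < lam) (hlam0 : lam ≤ 0)
    (ha0 : 0 ≤ a) (hb0 : 0 ≤ b) (hba : b ≤ a) (hPm : m ≤ P) (hm0 : 0 ≤ m)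
    (hP0 : 0 ≤ P) (hIab : I ≤ a * b)
    (hIA : (1 + lam) * P * (a * (a - b) - (a ^ 2 - b ^ 2) / 2) ≤ (a - b) * (a * P) - J) :
    (1 + lam) / 36 * (b ^ 2 - 2 * I + a ^ 2) * m ≤ -J - P * (I - a ^ 2) := by
  have hp : (0:ℝ) < 1 + lam := by linarith
  have hS : 0 ≤ a * b - I := by linarith
  nlinarith [mul_nonneg (mul_nonneg hp.le (sub_nonneg.2 hPm)) (sq_nonneg (a - b)),
    mul_nonneg hS (sub_nonneg.2 hPm),
    mul_nonneg (mul_nonneg hS hm0) (by linarith : (0:ℝ) ≤ 1 - (1 + lam) / 18),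
    mul_nonneg (mul_nonneg hp.le hm0) (sq_nonneg (a - b))]

lemma caseC_arith {lam a b I m P K : ℝ} (hlam : -1 < lam) (hlam0 : lam ≤ 0)
    (ha0 : 0 ≤ a) (hab : a < b) (hPm : m ≤ P) (hm0 : 0 ≤ m) (hP0 : 0 ≤ P)
    (hIab : I ≤ a * b)
    (hIC : (1 + lam) * m * ((b ^ 2 - a ^ 2) / 2 - a * (b - a)) ≤ K - (b - a) * (a * P)) :
    (1 + lam) / 36 * (b ^ 2 - 2 * I + a ^ 2) * m ≤ K - P * (I - a ^ 2) := by
  have hp : (0:ℝ) < 1 + lam := by linarith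
  have hS : 0 ≤ a * b - I := by linarith
  nlinarith [mul_nonneg hS (sub_nonneg.2 hPm),
    mul_nonneg (mul_nonneg hS hm0) (by linarith : (0:ℝ) ≤ 1 - (1 + lam) / 18),
    mul_nonneg (mul_nonneg hp.le hm0) (sq_nonneg (b - a))]

lemma caseB_arith {lam a b I m P K P1v P2v : ℝ} (hlam : -1 < lam) (hlam0 : lam ≤ 0)
    (ha0 : 0 ≤ a) (ha3 : a ≤ b / 3) (hab : a < b) (hm0 : 0 ≤ m) (hP0 : 0 ≤ P)
    (hIab : I ≤ a * b) (hIab2 : -(a * b) ≤ I)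
    (hP1 : 0 ≤ P1v)
    (hP2 : (1 + lam) * m * ((b ^ 2 - (b / 3) ^ 2) / 2 - b / 3 * (b - b / 3)) ≤ P2v)
    (hsum : P1v + P2v = K - (b - a) * (a * P)) :
    (1 + lam) / 36 * (b ^ 2 - 2 * I + a ^ 2) * m ≤ K - P * (I - a ^ 2) := by
  have hp : (0:ℝ) < 1 + lam := by linarith
  have hS : 0 ≤ a * b - I := by linarith
  have hb0 : 0 < b := lt_of_le_of_lt ha0 hab
  nlinarith [mul_nonneg hS hP0,
    mul_nonneg (mul_nonneg hp.le hm0) (by linarith : (0:ℝ) ≤ a * b + I),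
    mul_nonneg (mul_nonneg hp.le hm0)
      (mul_nonneg (by linarith : (0:ℝ) ≤ b / 3 - a) (by linarith : (0:ℝ) ≤ 7 * b / 3 + a)),
    mul_nonneg (mul_nonneg hp.le hm0) (sq_nonneg b)]

end EffectiveMonotonicityAux

/-- Effective monotonicity (second form) in a real inner product space: with
`Φ(T) := ∫₀ᵀ rΨ(r) dr`, for all `v, w ∈ H`,
`Φ(‖v‖) - Φ(‖w‖) - Ψ(‖w‖)⟨w, v-w⟩ ≥ ((1+λ)/36)‖v-w‖² inf{Ψ(r) : (‖v‖∨‖w‖)/3 ≤ r ≤ ‖v‖∨‖w‖}`. -/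
theorem stmt_9 {H : Type*} [NormedAddCommGroup H] [InnerProductSpace ℝ H]
    (Ψ Ψ' : ℝ → ℝ) (lam : ℝ)
    (hlam : -1 < lam) (hlam0 : lam ≤ 0)
    (hnonneg : ∀ t : ℝ, 0 ≤ t → 0 ≤ Ψ t)
    (hIntΨ' : ∀ a b : ℝ, 0 < a → 0 < b → IntervalIntegrable Ψ' volume a b)
    (hFTC : ∀ a b : ℝ, 0 < a → a ≤ b → Ψ b - Ψ a = ∫ t in a..b, Ψ' t)
    (hell : ∀ᵐ t ∂(volume.restrict (Ioi (0:ℝ))), lam * Ψ t ≤ t * Ψ' t)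
    (hint : ∀ t : ℝ, 0 < t → IntervalIntegrable (fun r => r * Ψ r) volume 0 t) :
    ∀ v w : H,
      ((1 + lam) / 36) * ‖v - w‖ ^ 2 *
          sInf (Ψ '' Icc (max ‖v‖ ‖w‖ / 3) (max ‖v‖ ‖w‖)) ≤
        (∫ r in (0:ℝ)..‖v‖, r * Ψ r) - (∫ r in (0:ℝ)..‖w‖, r * Ψ r) -
          Ψ ‖w‖ * inner ℝ w (v - w) := by
  intro v w
  have key := key_mono hlam hlam0 (psi_contAt hIntΨ' hFTC) hIntΨ' hFTC hell
  set a := ‖w‖ with hadef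
  set b := ‖v‖ with hbdef
  have ha0 : 0 ≤ a := norm_nonneg w
  have hb0 : 0 ≤ b := norm_nonneg v
  -- integrability of r * Ψ r on subintervals of [0, ∞)
  have hint' : ∀ t : ℝ, 0 ≤ t → IntervalIntegrable (fun r => r * Ψ r) volume 0 t := by
    intro t ht
    rcases eq_or_lt_of_le ht with h | h
    · rw [← h]
    · exact hint t h
  have hintsub : ∀ x y : ℝ, 0 ≤ x → x ≤ y →
      IntervalIntegrable (fun r => r * Ψ r) volume x y := by
    intro x y hx hxy
    apply (hint' y (le_trans hx hxy)).mono_set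
    rw [uIcc_of_le hxy, uIcc_of_le (le_trans hx hxy)]
    exact Icc_subset_Icc hx le_rfl
  -- inner product identities
  have hiprw : (inner ℝ w (v - w) : ℝ) = (inner ℝ w v : ℝ) - a ^ 2 := by
    rw [inner_sub_right, real_inner_self_eq_norm_sq]
  set I : ℝ := inner ℝ w v with hIdef
  have hIab : I ≤ a * b := real_inner_le_norm w v
  have hIab2 : -(a * b) ≤ I := by
    have h := abs_real_inner_le_norm w v
    have := (abs_le.1 h).1
    linarith
  have hD : ‖v - w‖ ^ 2 = b ^ 2 - 2 * I + a ^ 2 := by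
    rw [norm_sub_sq_real, real_inner_comm]
  rw [hD, hiprw, integral_interval_sub_left (hint' b hb0) (hint' a ha0)]
  set M := max b a with hMdef
  have hM0 : 0 ≤ M := le_trans hb0 (le_max_left _ _)
  have him : ∀ x ∈ Ψ '' Icc (M / 3) M, 0 ≤ x := by
    rintro x ⟨r, hr, rfl⟩
    exact hnonneg r (le_trans (by linarith) hr.1)
  set m := sInf (Ψ '' Icc (M / 3) M) with hmdef
  have hm0 : 0 ≤ m := Real.sInf_nonneg him
  have hmle : ∀ r : ℝ, M / 3 ≤ r → r ≤ M → m ≤ Ψ r := fun r h1 h2 =>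
    csInf_le ⟨0, him⟩ (mem_image_of_mem Ψ ⟨h1, h2⟩)
  have hΨa0 : 0 ≤ Ψ a := hnonneg a ha0
  rcases le_or_gt b a with hba | hab
  · -- Case A : ‖v‖ ≤ ‖w‖
    have hMa : M = a := max_eq_right hba
    have hΨam : m ≤ Ψ a := hmle a (by rw [hMa]; linarith) (by rw [hMa])
    have hptA : ∀ r ∈ Icc b a, (1 + lam) * (a - r) * Ψ a ≤ a * Ψ a - r * Ψ r :=
      fun r hr => pt_ge hlam hlam0 hnonneg key (le_trans hb0 hr.1) hr.2
    have hintRA : IntervalIntegrable (fun r => a * Ψ a - r * Ψ r) volume b a :=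
      intervalIntegrable_const.sub (hintsub b a hb0 hba)
    have hintLA : IntervalIntegrable (fun r => (1 + lam) * (a - r) * Ψ a) volume b a := by
      apply Continuous.intervalIntegrable
      fun_prop
    have hIA := integral_mono_on hba hintLA hintRA hptA
    have hL : ∫ r in b..a, (1 + lam) * (a - r) * Ψ a
        = (1 + lam) * Ψ a * (a * (a - b) - (a ^ 2 - b ^ 2) / 2) := by
      have he : (fun r => (1 + lam) * (a - r) * Ψ a)
          = fun r => ((1 + lam) * Ψ a) * (a - r) := by funext r; ring
      rw [he, intervalIntegral.integral_const_mul,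
        integral_sub intervalIntegrable_const intervalIntegrable_id,
        intervalIntegral.integral_const, integral_id, smul_eq_mul]
      ring
    have hR : ∫ r in b..a, (a * Ψ a - r * Ψ r)
        = (a - b) * (a * Ψ a) - ∫ r in b..a, r * Ψ r := by
      rw [integral_sub intervalIntegrable_const (hintsub b a hb0 hba),
        intervalIntegral.integral_const, smul_eq_mul]
    rw [hL, hR] at hIA
    rw [integral_symm b a]
    exact caseA_arith hlam hlam0 ha0 hb0 hba hΨam hm0 hΨa0 hIab hIA
  · -- b > a
    have hMb : M = b := max_eq_left hab.le
    rcases le_or_gt a (b / 3) with ha3 | ha3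
    · -- Case B : a ≤ b/3
      have hb3 : (0:ℝ) ≤ b / 3 := by linarith
      have hint1 : IntervalIntegrable (fun r => r * Ψ r - a * Ψ a) volume a (b / 3) :=
        (hintsub a (b / 3) ha0 ha3).sub intervalIntegrable_const
      have hint2 : IntervalIntegrable (fun r => r * Ψ r - a * Ψ a) volume (b / 3) b :=
        (hintsub (b / 3) b hb3 (by linarith)).sub intervalIntegrable_const
      have hsplit := integral_add_adjacent_intervals hint1 hint2
      have hP1 : 0 ≤ ∫ r in a..(b / 3), (r * Ψ r - a * Ψ a) := by
        apply integral_nonneg ha3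
        intro r hr
        have hpt := pt_le hlam hlam0 hnonneg key ha0 hr.1
        have hΨr := hnonneg r (le_trans ha0 hr.1)
        nlinarith [mul_nonneg (sub_nonneg.2 hr.1) hΨr]
      have hpt2 : ∀ r ∈ Icc (b / 3) b,
          ((1 + lam) * m) * (r - b / 3) ≤ r * Ψ r - a * Ψ a := by
        intro r hr
        have hpt := pt_le hlam hlam0 hnonneg key ha0 (le_trans ha3 hr.1)
        have hmr : m ≤ Ψ r := hmle r (by rw [hMb]; exact hr.1) (by rw [hMb]; exact hr.2)
        have hp0 : (0:ℝ) ≤ 1 + lam := by linarith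
        have hprod : (r - b / 3) * m ≤ (r - a) * Ψ r :=
          mul_le_mul (by linarith [hr.1]) hmr hm0 (by linarith [hr.1, ha3])
        nlinarith [mul_le_mul_of_nonneg_left hprod hp0]
      have hintL2 : IntervalIntegrable (fun r => ((1 + lam) * m) * (r - b / 3))
          volume (b / 3) b := by
        apply Continuous.intervalIntegrable
        fun_prop
      have hP2 := integral_mono_on (by linarith : b / 3 ≤ b) hintL2 hint2 hpt2
      have hL2 : ∫ r in (b / 3)..b, ((1 + lam) * m) * (r - b / 3)
          = (1 + lam) * m * ((b ^ 2 - (b / 3) ^ 2) / 2 - b / 3 * (b - b / 3)) := by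
        rw [intervalIntegral.integral_const_mul,
          integral_sub intervalIntegrable_id intervalIntegrable_const,
          intervalIntegral.integral_const, integral_id, smul_eq_mul]
        ring
      rw [hL2] at hP2
      have hRsum : (∫ r in a..(b / 3), (r * Ψ r - a * Ψ a))
            + ∫ r in (b / 3)..b, (r * Ψ r - a * Ψ a)
          = (∫ r in a..b, r * Ψ r) - (b - a) * (a * Ψ a) := by
        rw [hsplit, integral_sub (hintsub a b ha0 hab.le) intervalIntegrable_const,
          intervalIntegral.integral_const, smul_eq_mul]
        try ring
      exact caseB_arith hlam hlam0 ha0 ha3 hab hm0 hΨa0 hIab hIab2 hP1 hP2 hRsum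
    · -- Case C : b/3 < a < b
      have hΨam : m ≤ Ψ a := hmle a (by rw [hMb]; linarith) (by rw [hMb]; linarith)
      have hptC : ∀ r ∈ Icc a b, ((1 + lam) * m) * (r - a) ≤ r * Ψ r - a * Ψ a := by
        intro r hr
        have hpt := pt_le hlam hlam0 hnonneg key ha0 hr.1
        have hmr : m ≤ Ψ r := hmle r (by rw [hMb]; linarith [hr.1]) (by rw [hMb]; exact hr.2)
        have hp0 : (0:ℝ) ≤ 1 + lam := by linarith
        have hprod : (r - a) * m ≤ (r - a) * Ψ r :=
          mul_le_mul_of_nonneg_left hmr (by linarith [hr.1])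
        nlinarith [mul_le_mul_of_nonneg_left hprod hp0]
      have hintRC : IntervalIntegrable (fun r => r * Ψ r - a * Ψ a) volume a b :=
        (hintsub a b ha0 hab.le).sub intervalIntegrable_const
      have hintLC : IntervalIntegrable (fun r => ((1 + lam) * m) * (r - a)) volume a b := by
        apply Continuous.intervalIntegrable
        fun_prop
      have hIC := integral_mono_on hab.le hintLC hintRC hptC
      have hLC : ∫ r in a..b, ((1 + lam) * m) * (r - a)
          = (1 + lam) * m * ((b ^ 2 - a ^ 2) / 2 - a * (b - a)) := by
        rw [intervalIntegral.integral_const_mul,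
          integral_sub intervalIntegrable_id intervalIntegrable_const,
          intervalIntegral.integral_const, integral_id, smul_eq_mul]
        ring
      have hRC : ∫ r in a..b, (r * Ψ r - a * Ψ a)
          = (∫ r in a..b, r * Ψ r) - (b - a) * (a * Ψ a) := by
        rw [integral_sub (hintsub a b ha0 hab.le) intervalIntegrable_const,
          intervalIntegral.integral_const, smul_eq_mul]
      rw [hLC, hRC] at hIC
      exact caseC_arith hlam hlam0 ha0 hab hΨam hm0 hΨa0 hIab hIC
end
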